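/- arXiv:0903.5000 — 9 statements merged into one kernel-verified Lean document; each statement's English description precedes it below -/
import Mathlib

section
/- Let p be an odd prime and work in the polynomial ring F_p[y_1,...,y_n]. For nonnegative integers e_1,...,e_n define [e_1,...,e_n] = det(y_i^{p^{e_j}})_{1≤i,j≤n}. Then the Vandermonde-type determinant L_n = [0,1,...,n-1] equals, up to sign, the product of all nonzero linear forms c_1 y_1 + ... + c_n y_n with (c_1,...,c_n) ∈ F_p^n ranging over a set of representatives of lines; in particular L_n ≠ 0. -/
open MvPolynomial Finset

/-- `br p e = det (y_i ^ (p ^ e_j))` in `F_p[y_1,…,y_n]`. -/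
noncomputable def br (p : ℕ) {n : ℕ} (e : Fin n → ℕ) : MvPolynomial (Fin n) (ZMod p) :=
  Matrix.det (Matrix.of fun i j : Fin n => (X i : MvPolynomial (Fin n) (ZMod p)) ^ p ^ e j)

/-- `L_n = [0,1,…,n-1]`. -/
noncomputable def Lpoly (p n : ℕ) : MvPolynomial (Fin n) (ZMod p) :=
  br p (fun j : Fin n => (j : ℕ))

/-- `L_{n,s} = [0,…,ŝ,…,n]`. -/
noncomputable def Ls (p n s : ℕ) : MvPolynomial (Fin n) (ZMod p) :=
  br p (fun j : Fin n => if (j : ℕ) < s then (j : ℕ) else (j : ℕ) + 1)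

open scoped LinearAlgebra.Projectivization

/-!
Let `q` be the size of the ground field (here `q = p`). Every nonzero linear form
`ℓ = ∑ cᵢ yᵢ` divides `L_n`: by Frobenius `ℓ ^ q ^ j = ∑ cᵢ yᵢ ^ q ^ j`, so adding to a row
(with `cₖ ≠ 0`) the combination of the rows with coefficients `c` produces the row
`(ℓ ^ q ^ j)ⱼ`. Linear forms through distinct lines are non-associated primes, so the product
`P` over one representative per line divides `L_n`. There are `∑_{j<n} q^j` lines, which is
exactly the degree of the homogeneous polynomial `L_n`; and `L_n ≠ 0`, because the exponents
`q^j` are distinct, so the diagonal monomial `∏ yᵢ ^ q ^ i` occurs in the Leibniz expansion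
only once. Hence `L_n = a • P` for a constant `a ≠ 0`, and `a` can be absorbed into one of the
representatives.
-/

theorem exists_eq_C_mul_of_dvd_of_totalDegree_le {σ R : Type*} [CommRing R] [IsDomain R]
    {f g : MvPolynomial σ R} (h : f ∣ g) (hg : g ≠ 0) (hdeg : g.totalDegree ≤ f.totalDegree) :
    ∃ a ≠ 0, g = C a * f := by
  obtain ⟨k, rfl⟩ := h
  obtain ⟨hf, hk⟩ := mul_ne_zero_iff.mp hg
  rw [totalDegree_mul_of_isDomain hf hk] at hdeg
  have hkC := totalDegree_eq_zero_iff_eq_C.mp (by omega : k.totalDegree = 0)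
  refine ⟨coeff 0 k, fun h0 => hk (by rw [hkC, h0, map_zero]), by rw [mul_comm, ← hkC]⟩

section LinearForm

variable {σ : Type*} [Fintype σ]

section CommSemiring

variable {R : Type*} [CommSemiring R]

noncomputable def linearForm (c : σ → R) : MvPolynomial σ R :=
  ∑ i, C (c i) * X i

theorem coeff_single_linearForm [DecidableEq σ] (c : σ → R) (i : σ) :
    coeff (Finsupp.single i 1) (linearForm c) = c i := by
  simp [linearForm, coeff_sum]

theorem linearForm_injective : Function.Injective (linearForm : (σ → R) → MvPolynomial σ R) := by
  classical
  intro c c' h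
  funext i
  rw [← coeff_single_linearForm c, h, coeff_single_linearForm]

theorem linearForm_ne_zero {c : σ → R} (hc : c ≠ 0) : linearForm c ≠ 0 := by
  simpa [linearForm] using (linearForm_injective (R := R) (σ := σ)).ne hc

theorem linearForm_smul (a : R) (c : σ → R) : linearForm (a • c) = C a * linearForm c := by
  simp [linearForm, mul_sum, mul_assoc]

theorem isHomogeneous_linearForm (c : σ → R) : (linearForm c).IsHomogeneous 1 :=
  IsHomogeneous.sum _ _ _ fun _ _ => isHomogeneous_C_mul_X _ _

theorem totalDegree_linearForm {c : σ → R} (hc : c ≠ 0) : (linearForm c).totalDegree = 1 :=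
  (isHomogeneous_linearForm c).totalDegree (linearForm_ne_zero hc)

end CommSemiring

variable {K : Type*} [Field K]

theorem irreducible_linearForm {c : σ → K} (hc : c ≠ 0) : Irreducible (linearForm c) := by
  classical
  refine irreducible_of_totalDegree_eq_one (totalDegree_linearForm hc) fun x hx => ?_
  obtain ⟨i, hi⟩ := Function.ne_iff.mp hc
  have := hx (Finsupp.single i 1)
  rw [coeff_single_linearForm] at this
  exact isUnit_iff_ne_zero.mpr (ne_zero_of_dvd_ne_zero hi this)

theorem exists_smul_eq_of_linearForm_dvd {c c' : σ → K} (hc : c ≠ 0) (hc' : c' ≠ 0)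
    (h : linearForm c ∣ linearForm c') : ∃ a : Kˣ, a • c = c' := by
  obtain ⟨u, hu⟩ := (irreducible_linearForm hc).associated_of_dvd (irreducible_linearForm hc') h
  obtain ⟨r, hr, hur⟩ := isUnit_iff_eq_C_of_isReduced.mp u.isUnit
  refine ⟨hr.unit, linearForm_injective ?_⟩
  rw [Units.smul_def, IsUnit.unit_spec, ← hu, hur, linearForm_smul, mul_comm]

theorem linearForm_pow_card_pow [Fintype K] (c : σ → K) (e : ℕ) :
    linearForm c ^ Fintype.card K ^ e = ∑ i, C (c i) * X i ^ Fintype.card K ^ e := by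
  obtain ⟨p, _⟩ := CharP.exists K
  obtain ⟨k, hp, hk⟩ := FiniteField.card K p
  have : Fact p.Prime := ⟨hp⟩
  have hpow : Fintype.card K ^ e = p ^ ((k : ℕ) * e) := by rw [hk, pow_mul]
  rw [linearForm, hpow, sum_pow_char_pow, ← hpow]
  simp_rw [mul_pow, ← map_pow, FiniteField.pow_card_pow]

end LinearForm

namespace Projectivization

variable {K V : Type*} [DivisionRing K] [AddCommGroup V] [Module K V]

noncomputable instance [Finite V] : Fintype (ℙ K V) := Fintype.ofFinite _

theorem eq_of_smul_rep_eq_smul_rep {l l' : ℙ K V} (a a' : Kˣ) (h : a • l.rep = a' • l'.rep) :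
    l = l' := by
  rw [← mk_rep l, ← mk_rep l', mk_eq_mk_iff]
  exact ⟨a⁻¹ * a', by rw [mul_smul, ← h, inv_smul_smul]⟩

theorem smul_rep_injective (u : ℙ K V → Kˣ) : Function.Injective fun l => u l • l.rep :=
  fun _ _ h => eq_of_smul_rep_eq_smul_rep _ _ h

theorem existsUnique_mem_image_smul_rep [Finite V] [DecidableEq V] (u : ℙ K V → Kˣ) {v : V}
    (hv : v ≠ 0) :
    ∃! c, c ∈ univ.image (fun l => u l • l.rep) ∧ ∃ a : Kˣ, v = (a : K) • c := by
  obtain ⟨b, hb⟩ := exists_smul_eq_mk_rep K v hv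
  set l₀ := mk K v hv
  refine ⟨u l₀ • l₀.rep, ⟨mem_image_of_mem _ (mem_univ l₀), (u l₀ * b)⁻¹, ?_⟩, ?_⟩
  · rw [← Units.smul_def, ← hb, smul_smul, smul_smul, mul_assoc, inv_mul_cancel, one_smul]
  · rintro _ ⟨hc, a, rfl⟩
    obtain ⟨l, -, rfl⟩ := mem_image.mp hc
    have hl : l₀ = l := by
      conv_rhs => rw [← mk_rep l]
      rw [mk_eq_mk_iff]
      exact ⟨a * u l, by rw [mul_smul, Units.smul_def]⟩
    rw [hl]

end Projectivization

open Projectivization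

theorem prod_linearForm_image_smul_rep {σ K : Type*} [Fintype σ] [Field K] [Finite K]
    [DecidableEq (σ → K)] (u : ℙ K (σ → K) → Kˣ) :
    ∏ c ∈ univ.image (fun l : ℙ K (σ → K) => u l • l.rep), linearForm c
      = C ((∏ l, u l : Kˣ) : K) * ∏ l : ℙ K (σ → K), linearForm l.rep := by
  rw [prod_image fun l _ l' _ h => smul_rep_injective u h, Units.coe_prod, map_prod,
    ← prod_mul_distrib]
  simp_rw [Units.smul_def, linearForm_smul]

noncomputable def mooreDet (R : Type*) [CommRing R] (q n : ℕ) : MvPolynomial (Fin n) R :=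
  (Matrix.of fun i j : Fin n => (X i : MvPolynomial (Fin n) R) ^ q ^ (j : ℕ)).det

noncomputable def mooreExponent {n : ℕ} (q : ℕ) (τ : Equiv.Perm (Fin n)) : Fin n →₀ ℕ :=
  ∑ j, Finsupp.single (τ j) (q ^ (j : ℕ))

section MooreExponent

variable {n : ℕ}

theorem mooreExponent_apply (q : ℕ) (τ : Equiv.Perm (Fin n)) (j : Fin n) :
    mooreExponent q τ (τ j) = q ^ (j : ℕ) := by
  simp [mooreExponent, Finsupp.finsetSum_apply, Finsupp.single_apply]

theorem mooreExponent_injective {q : ℕ} (hq : 1 < q) :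
    Function.Injective (mooreExponent (n := n) q) := by
  intro τ τ' h
  ext j
  have hj := mooreExponent_apply q τ j
  rw [h, ← τ'.apply_symm_apply (τ j), mooreExponent_apply] at hj
  have hj' : τ'.symm (τ j) = j := Fin.ext (Nat.pow_right_injective hq hj)
  simpa using congrArg (fun k => (τ' k : ℕ)) hj'

theorem degree_mooreExponent (q : ℕ) (τ : Equiv.Perm (Fin n)) :
    (mooreExponent q τ).degree = ∑ j ∈ range n, q ^ j := by
  rw [mooreExponent, Finsupp.degree_eq_weight_one, map_sum, ← Fin.sum_univ_eq_sum_range (q ^ ·) n]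
  simp [Finsupp.weight_single]

end MooreExponent

section Moore

variable (R : Type*) [CommRing R] (n : ℕ)

theorem mooreDet_eq_sum (q : ℕ) : mooreDet R q n =
    ∑ τ : Equiv.Perm (Fin n), monomial (mooreExponent q τ) ((Equiv.Perm.sign τ : ℤ) : R) := by
  simp_rw [mooreDet, Matrix.det_apply', Matrix.of_apply, X_pow_eq_monomial, ← monomial_sum_one,
    ← map_intCast (C : R →+* MvPolynomial (Fin n) R), C_mul_monomial, mul_one, mooreExponent]

theorem isHomogeneous_mooreDet (q : ℕ) :
    (mooreDet R q n).IsHomogeneous (∑ j ∈ range n, q ^ j) := by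
  rw [mooreDet_eq_sum]
  exact IsHomogeneous.sum _ _ _ fun τ _ =>
    isHomogeneous_monomial _ (degree_mooreExponent q τ)

theorem coeff_mooreExponent_one_mooreDet {q : ℕ} (hq : 1 < q) :
    coeff (mooreExponent q 1) (mooreDet R q n) = 1 := by
  classical
  rw [mooreDet_eq_sum, coeff_sum, sum_eq_single 1]
  · simp
  · intro τ _ hτ
    rw [coeff_monomial, if_neg ((mooreExponent_injective hq).ne hτ)]
  · simp

theorem mooreDet_ne_zero [Nontrivial R] {q : ℕ} (hq : 1 < q) : mooreDet R q n ≠ 0 := by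
  intro h
  simpa [h] using coeff_mooreExponent_one_mooreDet R n hq

end Moore

section FiniteField

variable {K : Type*} [Field K] [Fintype K] {n : ℕ}

theorem linearForm_dvd_mooreDet {c : Fin n → K} (hc : c ≠ 0) :
    linearForm c ∣ mooreDet K (Fintype.card K) n := by
  obtain ⟨k, hk⟩ := Function.ne_iff.mp hc
  set M := Matrix.of fun i j : Fin n => (X i : MvPolynomial (Fin n) K) ^ Fintype.card K ^ (j : ℕ)
  have hrow : ∑ i, (C (c i) : MvPolynomial (Fin n) K) • M i =
      linearForm c • fun j : Fin n => linearForm c ^ (Fintype.card K ^ (j : ℕ) - 1) := by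
    funext j
    simp [M, Finset.sum_apply, linearForm_pow_card_pow, mul_pow_sub_one,
      (Fintype.card_pos (α := K)).ne']
  have h := Matrix.det_updateRow_sum M k fun i => C (c i)
  rw [hrow, Matrix.det_updateRow_smul, smul_eq_mul] at h
  exact (((Ne.isUnit hk).map C).dvd_mul_left).mp ⟨_, h.symm⟩

variable (K n)

theorem exists_mooreDet_eq_C_mul_prod :
    ∃ a ≠ 0, mooreDet K (Fintype.card K) n = C a * ∏ l : ℙ K (Fin n → K), linearForm l.rep := by
  have hP : ∏ l : ℙ K (Fin n → K), linearForm l.rep ≠ 0 :=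
    prod_ne_zero_iff.mpr fun l _ => linearForm_ne_zero l.rep_nonzero
  have hD := mooreDet_ne_zero K n (Fintype.one_lt_card (α := K))
  refine exists_eq_C_mul_of_dvd_of_totalDegree_le ?_ hD (le_of_eq ?_)
  · refine prod_dvd_of_isRelPrime (fun l _ l' _ hne => ?_) fun l _ =>
      linearForm_dvd_mooreDet l.rep_nonzero
    refine (irreducible_linearForm l.rep_nonzero).isRelPrime_iff_not_dvd.mpr fun h => hne ?_
    obtain ⟨a, ha⟩ := exists_smul_eq_of_linearForm_dvd l.rep_nonzero l'.rep_nonzero h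
    exact eq_of_smul_rep_eq_smul_rep a 1 (by rw [ha, one_smul])
  · rw [(isHomogeneous_mooreDet K n _).totalDegree hD,
      ((IsHomogeneous.prod _ _ _ fun l _ => isHomogeneous_linearForm l.rep).totalDegree hP)]
    simp [← Nat.card_eq_fintype_card, card_of_finrank K (Fin n → K) (Module.finrank_fin_fun K)]

end FiniteField

theorem stmt0_general (p n : ℕ) (hp : p.Prime) (hn : 0 < n) :
    (∃ S : Finset (Fin n → ZMod p),
      (∀ v : Fin n → ZMod p, v ≠ 0 →
        ∃! c, c ∈ S ∧ ∃ lam : (ZMod p)ˣ, v = (lam : ZMod p) • c) ∧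
      ∃ ε : ZMod p, (ε = 1 ∨ ε = -1) ∧
        Lpoly p n = C ε * ∏ c ∈ S, ∑ i, C (c i) * X i) ∧
    Lpoly p n ≠ 0 := by
  have : Fact p.Prime := ⟨hp⟩
  have : NeZero n := ⟨hn.ne'⟩
  classical
  obtain ⟨a, ha, hL⟩ := exists_mooreDet_eq_C_mul_prod (ZMod p) n
  rw [ZMod.card] at hL
  -- absorb the constant `a` into the representative of one line
  let u : ℙ (ZMod p) (Fin n → ZMod p) → (ZMod p)ˣ :=
    Pi.mulSingle (Classical.arbitrary _) (Units.mk0 a ha)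
  refine ⟨⟨univ.image fun l => u l • l.rep, fun v hv => existsUnique_mem_image_smul_rep u hv,
    1, Or.inl rfl, ?_⟩, mooreDet_ne_zero _ n hp.one_lt⟩
  change mooreDet (ZMod p) p n = C 1 * ∏ c ∈ _, linearForm c
  rw [prod_linearForm_image_smul_rep, Fintype.prod_pi_mulSingle', Units.val_mk0, map_one, one_mul,
    hL]

/-- The Vandermonde-type determinant `L_n` equals, up to sign, the product of the
nonzero linear forms `c₁y₁ + … + cₙyₙ` with `c` ranging over a set of representatives
of the lines of `F_p^n`; in particular `L_n ≠ 0`. -/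
theorem stmt0 (p n : ℕ) (hp : p.Prime) (hodd : Odd p) (hn : 0 < n) :
    (∃ S : Finset (Fin n → ZMod p),
      (∀ v : Fin n → ZMod p, v ≠ 0 →
        ∃! c, c ∈ S ∧ ∃ lam : (ZMod p)ˣ, v = (lam : ZMod p) • c) ∧
      ∃ ε : ZMod p, (ε = 1 ∨ ε = -1) ∧
        Lpoly p n = C ε * ∏ c ∈ S, ∑ i, C (c i) * X i) ∧
    Lpoly p n ≠ 0 :=
  stmt0_general p n hp hn
end

section
/- Let p be an odd prime. In F_p[y_1,...,y_n], for each s with 0 ≤ s < n, the determinant L_{n,s} = [0,1,...,ŝ,...,n] (the determinant det(y_i^{p^{e_j}}) with exponent sequence 0,1,...,n omitting s) is divisible by L_n = [0,1,...,n-1]; the quotient Q_{n,s} = L_{n,s}/L_n is the Dickson invariant. -/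
open MvPolynomial Finset

variable (p n : ℕ)
noncomputable def Mmat : Matrix (Fin (n+1)) (Fin (n+1))
    (Polynomial (MvPolynomial (Fin n) (ZMod p))) :=
  Matrix.of fun i j =>
    (Fin.lastCases Polynomial.X (fun i' => Polynomial.C (X i')) i) ^ p ^ (j : ℕ)
noncomputable def fpoly : Polynomial (MvPolynomial (Fin n) (ZMod p)) := (Mmat p n).det

lemma minor_det (k : Fin (n+1)) :
    ((Mmat p n).submatrix (Fin.last n).succAbove k.succAbove).det
      = Polynomial.C (br p (fun j' => ((k.succAbove j' : Fin (n+1)) : ℕ))) := by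
  rw [br, RingHom.map_det]
  congr 1
  ext i j
  simp [Mmat, Matrix.submatrix, Fin.succAbove_last, map_pow]

lemma fpoly_expand :
    fpoly p n = ∑ k : Fin (n+1), ((-1) ^ (n + (k : ℕ))
      * Polynomial.C (br p (fun j' => ((k.succAbove j' : Fin (n+1)) : ℕ)))
        * Polynomial.X ^ p ^ (k : ℕ) :
        Polynomial (MvPolynomial (Fin n) (ZMod p))) := by
  rw [fpoly, Matrix.det_succ_row _ (Fin.last n)]
  refine Finset.sum_congr rfl fun k _ => ?_
  rw [minor_det]
  simp [Mmat, Fin.val_last, smul_eq_mul]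

lemma coeff_fpoly (hp : 1 < p) (k : Fin (n+1)) :
    (fpoly p n).coeff (p ^ (k : ℕ)) =
      (-1) ^ (n + (k : ℕ)) * br p (fun j' => ((k.succAbove j' : Fin (n+1)) : ℕ)) := by
  rw [fpoly_expand, Polynomial.finset_sum_coeff]
  have hinj : ∀ j : Fin (n+1), p ^ (k:ℕ) = p ^ (j:ℕ) ↔ j = k := by
    intro j
    constructor
    · intro h
      exact (Fin.ext (Nat.pow_right_injective hp h.symm))
    · rintro rfl; rfl
  have : ∀ j : Fin (n+1),
      ((-1) ^ (n + (j : ℕ)) * Polynomial.C (br p (fun j' => ((j.succAbove j' : Fin (n+1)) : ℕ)))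
        * Polynomial.X ^ p ^ (j : ℕ)).coeff (p ^ (k:ℕ)) =
      if j = k then (-1) ^ (n + (j : ℕ)) * br p (fun j' => ((j.succAbove j' : Fin (n+1)) : ℕ))
        else 0 := by
    intro j
    rw [mul_assoc]
    rw [show ((-1 : Polynomial (MvPolynomial (Fin n) (ZMod p))) ^ (n + (j:ℕ)))
        = Polynomial.C ((-1) ^ (n + (j:ℕ))) by rw [map_pow, map_neg, map_one]]
    rw [Polynomial.coeff_C_mul, Polynomial.coeff_C_mul, Polynomial.coeff_X_pow]
    simp only [hinj j]
    split <;> simp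
  rw [Finset.sum_congr rfl (fun j _ => this j), Finset.sum_ite_eq' Finset.univ k]
  simp

lemma br_last :
    br p (fun j' => (((Fin.last n).succAbove j' : Fin (n+1)) : ℕ)) = Lpoly p n := by
  unfold Lpoly
  congr 1
  funext j'
  simp [Fin.succAbove_last]

lemma br_s (s : ℕ) (hs : s < n) :
    br p (fun j' => (((⟨s, by omega⟩ : Fin (n+1)).succAbove j' : Fin (n+1)) : ℕ))
      = Ls p n s := by
  unfold Ls
  congr 1
  funext j'
  rw [Fin.succAbove]
  split <;> rename_i h
  · rw [if_pos (by simpa [Fin.lt_def] using h)]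
    simp
  · rw [if_neg (by simpa [Fin.lt_def] using h)]
    simp

variable [Fact p.Prime]

noncomputable def vmap (c : Fin n → ZMod p) : MvPolynomial (Fin n) (ZMod p) :=
  ∑ i, MvPolynomial.C (c i) * X i

lemma vmap_injective : Function.Injective (vmap p n) := by
  intro c c' h
  funext i
  have := congrArg (MvPolynomial.coeff (Finsupp.single i 1)) h
  simpa [vmap, coeff_sum, MvPolynomial.coeff_C_mul, MvPolynomial.coeff_X',
    Finsupp.single_left_inj (one_ne_zero (α := ℕ)), eq_comm (a := i)] using this

lemma eval_fpoly_vmap (c : Fin n → ZMod p) :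
    (fpoly p n).eval (vmap p n c) = 0 := by
  classical
  have hch : CharP (MvPolynomial (Fin n) (ZMod p)) p := inferInstance
  set R := MvPolynomial (Fin n) (ZMod p)
  have : (fpoly p n).eval (vmap p n c)
      = ((Mmat p n).map (Polynomial.evalRingHom (vmap p n c))).det := by
    rw [fpoly]
    rw [show ((Mmat p n).map (Polynomial.evalRingHom (vmap p n c)))
        = (Polynomial.evalRingHom (vmap p n c)).mapMatrix (Mmat p n) from rfl]
    rw [← RingHom.map_det]
    rfl
  rw [this]
  set N := (Mmat p n).map (Polynomial.evalRingHom (vmap p n c)) with hN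
  set d : Fin (n+1) → R := Fin.lastCases (0 : R) (fun i => MvPolynomial.C (c i)) with hd
  have hdlast : d (Fin.last n) = 0 := by rw [hd]; exact Fin.lastCases_last
  have hdcast : ∀ i : Fin n, d (Fin.castSucc i) = MvPolynomial.C (c i) := by
    intro i; simp [hd]
  have hrow : N = N.updateRow (Fin.last n) (∑ k : Fin (n+1), d k • N k) := by
    refine Matrix.ext fun i j => ?_
    rcases eq_or_ne i (Fin.last n) with rfl | hi
    · rw [Matrix.updateRow_self]
      simp only [Finset.sum_apply, Pi.smul_apply]
      have h1 : N (Fin.last n) j = (vmap p n c) ^ p ^ (j : ℕ) := by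
        simp [hN, Mmat]
      have h2 : ∀ i' : Fin n, N (Fin.castSucc i') j = (X i' : R) ^ p ^ (j : ℕ) := by
        intro i'
        simp [hN, Mmat]
      rw [h1]
      rw [Fin.sum_univ_castSucc]
      simp only [hdlast, hdcast, zero_smul, add_zero]
      rw [vmap, sum_pow_char_pow]
      refine Finset.sum_congr rfl fun i' _ => ?_
      rw [h2 i', smul_eq_mul, mul_pow, ← map_pow, ZMod.pow_card_pow]
    · rw [Matrix.updateRow_ne hi]
  rw [hrow, Matrix.det_updateRow_sum]
  rw [hdlast, zero_smul]

lemma coeff_br_diag :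
    MvPolynomial.coeff (∑ i : Fin n, Finsupp.single i (p ^ (i : ℕ))) (Lpoly p n) = 1 := by
  classical
  have hp1 : 1 < p := (Fact.out : p.Prime).one_lt
  rw [Lpoly, br, Matrix.det_apply]
  have key : ∀ σ : Equiv.Perm (Fin n),
      MvPolynomial.coeff (∑ i : Fin n, Finsupp.single i (p ^ (i : ℕ)))
        (∏ i : Fin n, (X (σ i) : MvPolynomial (Fin n) (ZMod p)) ^ p ^ (i : ℕ))
      = if σ = 1 then 1 else 0 := by
    intro σ
    have hprod : (∏ i : Fin n, (X (σ i) : MvPolynomial (Fin n) (ZMod p)) ^ p ^ (i : ℕ))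
        = monomial (∑ i : Fin n, Finsupp.single (σ i) (p ^ (i : ℕ))) 1 := by
      simp only [X_pow_eq_monomial]
      rw [MvPolynomial.monomial_sum_one]
    rw [hprod, MvPolynomial.coeff_monomial]
    have hiff : (∑ i : Fin n, Finsupp.single (σ i) (p ^ (i : ℕ)))
        = (∑ i : Fin n, Finsupp.single i (p ^ (i : ℕ))) ↔ σ = 1 := by
      constructor
      · intro h
        have h2 : (∑ i : Fin n, Finsupp.single i (p ^ ((σ.symm i : Fin n) : ℕ)))
            = (∑ i : Fin n, Finsupp.single i (p ^ (i : ℕ))) := by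
          rw [← h]
          exact (Equiv.sum_comp σ.symm (fun i => Finsupp.single (σ i) (p ^ (i : ℕ)))).symm
            ▸ (Finset.sum_congr rfl (fun i _ => by rw [Equiv.apply_symm_apply]))
        ext i
        have := congrArg (fun f => f i) h2
        simp only [Finsupp.coe_finset_sum, Finset.sum_apply, Finsupp.single_apply] at this
        rw [Finset.sum_eq_single i (fun b _ hb => if_neg hb) (by simp),
          Finset.sum_eq_single i (fun b _ hb => if_neg hb) (by simp)] at this
        simp only [if_pos rfl] at this
        have h3 : σ.symm i = i := Fin.ext (Nat.pow_right_injective hp1 this)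
        have h4 := congrArg σ h3
        rw [Equiv.apply_symm_apply] at h4
        simp [← h4]
      · rintro rfl; simp
    simp only [hiff]
  rw [MvPolynomial.coeff_sum]
  have step : ∀ σ : Equiv.Perm (Fin n),
      MvPolynomial.coeff (∑ i : Fin n, Finsupp.single i (p ^ (i : ℕ)))
        (Equiv.Perm.sign σ • ∏ i : Fin n,
          (Matrix.of fun i j : Fin n =>
            (X i : MvPolynomial (Fin n) (ZMod p)) ^ p ^ ((fun j : Fin n => (j:ℕ)) j)) (σ i) i)
      = if σ = 1 then 1 else 0 := by
    intro σ
    rw [MvPolynomial.coeff_smul]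
    have : MvPolynomial.coeff (∑ i : Fin n, Finsupp.single i (p ^ (i : ℕ)))
        (∏ i : Fin n, (X (σ i) : MvPolynomial (Fin n) (ZMod p)) ^ p ^ (i : ℕ))
        = if σ = 1 then 1 else 0 := key σ
    rw [show (∏ i : Fin n,
          (Matrix.of fun i j : Fin n =>
            (X i : MvPolynomial (Fin n) (ZMod p)) ^ p ^ ((fun j : Fin n => (j:ℕ)) j)) (σ i) i)
        = ∏ i : Fin n, (X (σ i) : MvPolynomial (Fin n) (ZMod p)) ^ p ^ (i : ℕ) from rfl, this]
    split
    · rename_i h; subst h; simp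
    · simp
  rw [Finset.sum_congr rfl fun σ _ => step σ]
  simp

lemma Lpoly_ne_zero : Lpoly p n ≠ 0 := by
  intro h
  have := coeff_br_diag p n
  rw [h] at this
  simp at this

lemma coeff_fpoly_top : (fpoly p n).coeff (p ^ n) = Lpoly p n := by
  have hp1 : 1 < p := (Fact.out : p.Prime).one_lt
  have := coeff_fpoly p n hp1 (Fin.last n)
  rw [Fin.val_last] at this
  rw [this, br_last, Even.neg_one_pow ⟨n, rfl⟩, one_mul]

lemma fpoly_ne_zero : fpoly p n ≠ 0 := by
  intro h
  apply Lpoly_ne_zero p n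
  rw [← coeff_fpoly_top, h, Polynomial.coeff_zero]

lemma natDegree_fpoly : (fpoly p n).natDegree = p ^ n := by
  have hp1 : 1 < p := (Fact.out : p.Prime).one_lt
  refine le_antisymm ?_ (Polynomial.le_natDegree_of_ne_zero ?_)
  · rw [fpoly_expand]
    refine Polynomial.natDegree_sum_le_of_forall_le _ _ fun k _ => ?_
    refine le_trans ?_ (Nat.pow_le_pow_right (le_of_lt hp1) (Nat.lt_succ_iff.mp k.isLt))
    refine (Polynomial.natDegree_mul_le).trans ?_
    refine le_trans (add_le_add Polynomial.natDegree_mul_le le_rfl) ?_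
    simp
  · rw [coeff_fpoly_top]
    exact Lpoly_ne_zero p n

/-- For `0 ≤ s < n`, `L_{n,s}` is divisible by `L_n` (the quotient being the
Dickson invariant `Q_{n,s}`). -/
theorem stmt1 (p n s : ℕ) (hp : p.Prime) (hodd : Odd p) (hs : s < n) :
    Lpoly p n ∣ Ls p n s := by
  classical
  haveI : Fact p.Prime := ⟨hp⟩
  have hp1 : 1 < p := hp.one_lt
  set f := fpoly p n with hf
  set S : Finset (MvPolynomial (Fin n) (ZMod p)) :=
    Finset.image (vmap p n) Finset.univ with hS
  have hcard : S.card = p ^ n := by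
    rw [hS, Finset.card_image_of_injective _ (vmap_injective p n), Finset.card_univ,
      Fintype.card_fun]
    simp [ZMod.card]
  have hf0 : f ≠ 0 := fpoly_ne_zero p n
  have hroots : S.val ≤ f.roots := by
    refine (Multiset.le_iff_subset S.nodup).2 fun a ha => ?_
    rw [Finset.mem_val, hS, Finset.mem_image] at ha
    obtain ⟨c, -, rfl⟩ := ha
    rw [Polynomial.mem_roots']
    exact ⟨hf0, eval_fpoly_vmap p n c⟩
  have hdvd : (S.val.map fun a => Polynomial.X - Polynomial.C a).prod ∣ f :=
    (Multiset.prod_dvd_prod_of_le (Multiset.map_le_map hroots)).trans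
      (Polynomial.prod_multiset_X_sub_C_dvd f)
  set P := (S.val.map fun a => Polynomial.X - Polynomial.C a).prod with hP
  obtain ⟨q, hq⟩ := hdvd
  have hPmonic : P.Monic :=
    Polynomial.monic_multiset_prod_of_monic _ _ fun a _ => Polynomial.monic_X_sub_C a
  have hPdeg : P.natDegree = p ^ n := by
    rw [hP, Polynomial.natDegree_multiset_prod_of_monic]
    · simp [Multiset.map_map, Function.comp_def, Polynomial.natDegree_X_sub_C, hcard]
    · intro g hg
      rw [Multiset.mem_map] at hg
      obtain ⟨a, -, rfl⟩ := hg
      exact Polynomial.monic_X_sub_C a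
  have hq0 : q ≠ 0 := by rintro rfl; rw [mul_zero] at hq; exact hf0 hq
  have hdeg : q.natDegree = 0 := by
    have h1 := Polynomial.natDegree_mul hPmonic.ne_zero hq0
    rw [← hq, natDegree_fpoly, hPdeg] at h1
    omega
  have hqC : q = Polynomial.C (q.coeff 0) := Polynomial.eq_C_of_natDegree_eq_zero hdeg
  have hlead : q.coeff 0 = Lpoly p n := by
    have h1 : f.leadingCoeff = Lpoly p n := by
      rw [Polynomial.leadingCoeff, natDegree_fpoly, coeff_fpoly_top]
    rw [hq, Polynomial.leadingCoeff_mul, hPmonic.leadingCoeff, one_mul] at h1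
    rwa [Polynomial.leadingCoeff, hdeg] at h1
  have hcoefs : f.coeff (p ^ s) = Lpoly p n * P.coeff (p ^ s) := by
    conv_lhs => rw [hq, hqC, hlead]
    rw [Polynomial.coeff_mul_C]
    ring
  have hcf : f.coeff (p ^ s) = (-1) ^ (n + s) * Ls p n s := by
    have h2 := coeff_fpoly p n hp1 ⟨s, by omega⟩
    rw [show ((⟨s, by omega⟩ : Fin (n+1)) : ℕ) = s from rfl] at h2
    rw [hf, h2, br_s p n s hs]
  have hdvd2 : Lpoly p n ∣ (-1 : MvPolynomial (Fin n) (ZMod p)) ^ (n + s) * Ls p n s :=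
    ⟨P.coeff (p ^ s), by rw [← hcf, hcoefs]⟩
  have hu : IsUnit ((-1 : MvPolynomial (Fin n) (ZMod p)) ^ (n + s)) :=
    (isUnit_one.neg).pow _
  exact (IsUnit.dvd_mul_left hu).mp hdvd2
end

section
/- Let p be an odd prime and 0 ≤ u < v. In F_p[y_1, y_2]: [u,v] = Σ_{s=u}^{v-1} V_1^{p^v − p^{s+1} + p^u} · V_2^{p^s}, where [u,v] = y_1^{p^u} y_2^{p^v} − y_2^{p^u} y_1^{p^v}, V_1 = y_1, and V_2 = [0,1]/y_1 (i.e., V_2 = L_2/L_1). -/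
open MvPolynomial Finset

/-- For `0 ≤ u < v`, in `F_p[y₁,y₂]`:
`[u,v] = Σ_{s=u}^{v-1} V₁^{p^v − p^{s+1} + p^u} · V₂^{p^s}`, where `V₁ = y₁` and
`V₂ = L₂/L₁`. -/
theorem stmt11 (p u v : ℕ) (hp : p.Prime) (hodd : Odd p) (huv : u < v)
    (V2 : MvPolynomial (Fin 2) (ZMod p))
    (hV2 : (X 0 : MvPolynomial (Fin 2) (ZMod p)) * V2 = Lpoly p 2) :
    br p ![u, v] =
      ∑ s ∈ Finset.Ico u v,
        (X 0 : MvPolynomial (Fin 2) (ZMod p)) ^ (p ^ v - p ^ (s + 1) + p ^ u) *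
          V2 ^ p ^ s := by
  haveI : Fact p.Prime := ⟨hp⟩
  set x : MvPolynomial (Fin 2) (ZMod p) := X 0 with hx
  set y : MvPolynomial (Fin 2) (ZMod p) := X 1 with hy
  have hL : Lpoly p 2 = x * y ^ p - x ^ p * y := by
    simp [Lpoly, br, Matrix.det_fin_two, hx, hy]
  have hbr : br p ![u, v] = x ^ p ^ u * y ^ p ^ v - x ^ p ^ v * y ^ p ^ u := by
    simp [br, Matrix.det_fin_two, hx, hy]
  set A := 2 * p ^ v + p ^ u with hA
  set g : ℕ → MvPolynomial (Fin 2) (ZMod p) := fun s => x ^ (A - p ^ s) * y ^ p ^ s with hg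
  apply mul_left_cancel₀ (pow_ne_zero (p ^ v) (X_ne_zero (R := ZMod p) (0 : Fin 2)))
  rw [Finset.mul_sum]
  have hterm : ∀ s ∈ Finset.Ico u v,
      x ^ p ^ v * (x ^ (p ^ v - p ^ (s + 1) + p ^ u) * V2 ^ p ^ s) = g (s + 1) - g s := by
    intro s hs
    rw [Finset.mem_Ico] at hs
    have hpv : p ^ (s + 1) ≤ p ^ v := Nat.pow_le_pow_right hp.pos hs.2
    have hps : p ^ s ≤ p ^ v := Nat.pow_le_pow_right hp.pos (le_of_lt hs.2)
    have hps1 : p ^ s < p ^ (s + 1) :=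
      Nat.pow_lt_pow_right hp.one_lt (Nat.lt_succ_self s)
    have e1 : p ^ v + (p ^ v - p ^ (s + 1) + p ^ u) = (A - p ^ (s + 1) - p ^ s) + p ^ s := by
      omega
    have hLs : (Lpoly p 2) ^ p ^ s = x ^ p ^ s * y ^ p ^ (s + 1) - x ^ p ^ (s + 1) * y ^ p ^ s := by
      rw [hL, sub_pow_char_pow, mul_pow, mul_pow, ← pow_mul, ← pow_mul, ← pow_succ']
    calc x ^ p ^ v * (x ^ (p ^ v - p ^ (s + 1) + p ^ u) * V2 ^ p ^ s)
        = x ^ ((A - p ^ (s + 1) - p ^ s)) * ((x * V2) ^ p ^ s) := by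
          rw [mul_pow, ← mul_assoc, ← pow_add, e1, pow_add, mul_assoc]
      _ = x ^ ((A - p ^ (s + 1) - p ^ s)) * (x ^ p ^ s * y ^ p ^ (s + 1) - x ^ p ^ (s + 1) * y ^ p ^ s) := by
          rw [hV2, hLs]
      _ = g (s + 1) - g s := by
          have e2 : (A - p ^ (s + 1) - p ^ s) + p ^ s = A - p ^ (s + 1) := by omega
          have e3 : (A - p ^ (s + 1) - p ^ s) + p ^ (s + 1) = A - p ^ s := by omega
          rw [hg, mul_sub, ← mul_assoc, ← mul_assoc, ← pow_add, ← pow_add, e2, e3]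
  rw [Finset.sum_congr rfl hterm, Finset.sum_Ico_eq_sub _ (le_of_lt huv),
    Finset.sum_range_sub g, Finset.sum_range_sub g, hbr]
  have h1 : A - p ^ v = p ^ v + p ^ u := by
    have := Nat.one_le_two_pow (n := 0); omega
  have h2 : A - p ^ u = 2 * p ^ v := by
    have : p ^ u ≤ p ^ v := Nat.pow_le_pow_right hp.pos (le_of_lt huv); omega
  simp only [hg, h1, h2]
  ring
end

section
/- Let p be an odd prime and 0 ≤ u < v. In F_p[y_1,y_2,y_3]: [u,v,v+1] = Σ_{s=u}^{v-1} [u,s+1] · L_2^{p^v − p^{s+1}} · V_3^{p^s}, where [a,b] denotes the 2×2 determinant det(y_i^{p^{e_j}}) in y_1,y_2, L_2 = [0,1], and V_3 = L_3/L_2 with L_3 the 3×3 determinant [0,1,2]. -/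
open MvPolynomial Finset

lemma br_pow (p : ℕ) [Fact p.Prime] {n : ℕ} (e : Fin n → ℕ) (k : ℕ) :
    (br p e) ^ p ^ k = br p (fun j => e j + k) := by
  induction k with
  | zero => simp [pow_one]
  | succ k ih =>
    have hmain : (br p (fun j => e j + k)) ^ p = br p (fun j => e j + (k+1)) := by
      have h1 : (br p (fun j => e j + k)) ^ p
          = frobenius (MvPolynomial (Fin n) (ZMod p)) p (br p (fun j => e j + k)) := rfl
      rw [h1, br, RingHom.map_det, br]
      congr 1
      ext i j
      rw [RingHom.mapMatrix_apply, Matrix.map_apply, Matrix.of_apply, Matrix.of_apply,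
        frobenius_def, ← pow_mul, ← pow_succ, Nat.add_assoc]
    rw [pow_succ, pow_mul, ih, hmain]

lemma br2_expand (p a b : ℕ) :
    rename (Fin.castSucc : Fin 2 → Fin 3) (br p ![a, b]) =
      X 0 ^ p ^ a * X 1 ^ p ^ b - X 0 ^ p ^ b * X 1 ^ p ^ a := by
  simp [br, Matrix.det_fin_two, Matrix.of_apply, map_sub, map_mul, map_pow, rename_X]

lemma br3_expand (p a b c : ℕ) :
    br p ![a, b, c] =
      X 0 ^ p ^ a * (X 1 ^ p ^ b * X 2 ^ p ^ c - X 1 ^ p ^ c * X 2 ^ p ^ b)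
      - X 0 ^ p ^ b * (X 1 ^ p ^ a * X 2 ^ p ^ c - X 1 ^ p ^ c * X 2 ^ p ^ a)
      + X 0 ^ p ^ c * (X 1 ^ p ^ a * X 2 ^ p ^ b - X 1 ^ p ^ b * X 2 ^ p ^ a) := by
  simp [br, Matrix.det_fin_three, Matrix.of_apply]
  ring

lemma L2_rename (p : ℕ) :
    rename (Fin.castSucc : Fin 2 → Fin 3) (Lpoly p 2) =
      X 0 * X 1 ^ p - X 0 ^ p * X 1 := by
  simp [Lpoly, br, Matrix.det_fin_two, Matrix.of_apply, map_sub, map_mul, map_pow, rename_X]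

lemma L2_ne (p : ℕ) [Fact p.Prime] :
    rename (Fin.castSucc : Fin 2 → Fin 3) (Lpoly p 2) ≠ 0 := by
  rw [L2_rename]
  intro h
  have h2 := congrArg (aeval (fun i : Fin 3 => if i = 0 then (1 : Polynomial (ZMod p)) else Polynomial.X)) h
  simp [map_sub, map_mul, map_pow] at h2
  have h3 := congrArg (fun q => Polynomial.coeff q p) h2
  have hp1 : p ≠ 1 := (Fact.out : p.Prime).ne_one
  simp [Polynomial.coeff_X_pow, Polynomial.coeff_X, hp1, eq_comm] at h3

lemma br2_pow (p : ℕ) [Fact p.Prime] (k : ℕ) :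
    (Lpoly p 2) ^ p ^ k = br p ![k, k + 1] := by
  rw [Lpoly, br_pow]
  congr 1
  funext j
  fin_cases j <;> simp <;> omega

lemma br3_pow (p : ℕ) [Fact p.Prime] (k : ℕ) :
    (Lpoly p 3) ^ p ^ k = br p ![k, k + 1, k + 2] := by
  rw [Lpoly, br_pow]
  congr 1
  funext j
  fin_cases j <;> simp <;> omega

/-- For `0 ≤ u < v`, in `F_p[y₁,y₂,y₃]`:
`[u,v,v+1] = Σ_{s=u}^{v-1} [u,s+1] · L₂^{p^v − p^{s+1}} · V₃^{p^s}`, where `[u,s+1]`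
and `L₂` are 2×2 determinants in `y₁,y₂` and `V₃ = L₃/L₂`. -/
theorem stmt12 (p u v : ℕ) (hp : p.Prime) (hodd : Odd p) (huv : u < v)
    (V3 : MvPolynomial (Fin 3) (ZMod p))
    (hV3 : rename Fin.castSucc (Lpoly p 2) * V3 = Lpoly p 3) :
    br p ![u, v, v + 1] =
      ∑ s ∈ Finset.Ico u v,
        rename Fin.castSucc (br p ![u, s + 1]) *
          (rename Fin.castSucc (Lpoly p 2)) ^ (p ^ v - p ^ (s + 1)) *
          V3 ^ p ^ s := by
  haveI : Fact p.Prime := ⟨hp⟩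
  induction v, huv using Nat.le_induction with
  | base =>
    rw [Nat.Ico_succ_singleton,
      Finset.sum_singleton, Nat.sub_self, pow_zero, mul_one]
    have h1 : br p ![u, u + 1, u + 1 + 1] = (Lpoly p 3) ^ p ^ u := by
      rw [br3_pow]
    rw [h1, ← hV3, mul_pow, ← br2_pow, map_pow]
  | succ v hv ih =>
    have hL2 := L2_ne p
    have hpow1 : p ^ v ≤ p ^ (v + 1) := Nat.pow_le_pow_right hp.one_lt.le (by omega)
    -- split off top term
    rw [Finset.sum_Ico_succ_top (by omega : u ≤ v), Nat.sub_self, pow_zero, mul_one]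
    have hsum : ∀ s ∈ Finset.Ico u v,
        rename (Fin.castSucc : Fin 2 → Fin 3) (br p ![u, s + 1]) *
          (rename Fin.castSucc (Lpoly p 2)) ^ (p ^ (v+1) - p ^ (s + 1)) * V3 ^ p ^ s
        = (rename (Fin.castSucc : Fin 2 → Fin 3) (Lpoly p 2)) ^ (p ^ (v+1) - p ^ v) *
          (rename Fin.castSucc (br p ![u, s + 1]) *
            (rename Fin.castSucc (Lpoly p 2)) ^ (p ^ v - p ^ (s + 1)) * V3 ^ p ^ s) := by
      intro s hs
      have hsv : s + 1 ≤ v := by simpa using (Finset.mem_Ico.mp hs).2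
      have hps : p ^ (s+1) ≤ p ^ v := Nat.pow_le_pow_right hp.one_lt.le hsv
      rw [show p ^ (v+1) - p ^ (s+1) = (p ^ (v+1) - p ^ v) + (p ^ v - p ^ (s+1)) by omega,
        pow_add]
      ring
    rw [Finset.sum_congr rfl hsum, ← Finset.mul_sum, ← ih]
    -- now cancel L2^(p^v)
    apply mul_right_cancel₀ (pow_ne_zero (p ^ v) hL2)
    rw [add_mul]
    have e1 : (rename (Fin.castSucc : Fin 2 → Fin 3) (Lpoly p 2)) ^ (p ^ (v+1) - p ^ v) *
        br p ![u, v, v + 1] * (rename Fin.castSucc (Lpoly p 2)) ^ p ^ v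
        = rename (Fin.castSucc : Fin 2 → Fin 3) (br p ![v+1, v+2]) * br p ![u, v, v + 1] := by
      rw [mul_right_comm, ← pow_add, Nat.sub_add_cancel hpow1, ← map_pow, br2_pow]
    have e2 : rename (Fin.castSucc : Fin 2 → Fin 3) (br p ![u, v+1]) * V3 ^ p ^ v *
        (rename Fin.castSucc (Lpoly p 2)) ^ p ^ v
        = rename (Fin.castSucc : Fin 2 → Fin 3) (br p ![u, v+1]) * br p ![v, v+1, v+2] := by
      rw [mul_assoc, mul_comm (V3 ^ p ^ v), ← mul_pow, hV3, br3_pow]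
    rw [e1, e2, ← map_pow, br2_pow]
    have hv2 : v + 1 + 1 = v + 2 := rfl
    rw [hv2, br3_expand p u (v+1) (v+2), br3_expand p u v (v+1), br3_expand p v (v+1) (v+2),
      br2_expand, br2_expand, br2_expand,
      show p ^ (v+2) = p ^ (v+1) * p by rw [pow_succ],
      show p ^ (v+1) = p ^ v * p by rw [pow_succ]]
    ring
end

section
/- Let p be an odd prime and 0 ≤ u < v < w. In the fraction field of F_p[y_1,y_2,y_3]: [u,v,w] = Σ_{s=u}^{v-1} [u,s+1][v,w] L_2^{−p^{s+1}} V_3^{p^s} + Σ_{s=v}^{w-1} [u,v][s+1,w] L_2^{−p^{s+1}} V_3^{p^s}, where [a,b] are 2×2 determinants in y_1,y_2, L_2 = [0,1], and V_3 = L_3/L_2. -/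
/-!
Expanding along `y₃`, `[u,v,w] = y₃^{p^u}[v,w] - y₃^{p^v}[u,w] + y₃^{p^w}[u,v]`, and Frobenius
turns `L₂^{p^s}`, `L₃^{p^s}` into `[s,s+1]`, `[s,s+1,s+2]`, so `V₃^{p^s} = [s,s+1,s+2]/[s,s+1]`.
The identity is therefore one about the minors of any `3 × ℕ` matrix over a field whose
consecutive minors `[s,s+1]` of the first two rows are nonzero. There
`δ_u(s) = [u,s,s+1]/[s,s+1]` vanishes at `s = u` and, by a three-term Plücker relation,
`δ_u(s+1) - δ_u(s) = [u,s+1][s,s+1,s+2]/([s,s+1][s+1,s+2])`; the two sums telescope to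
`[v,w] δ_u(v)` and `[u,v] δ_w(v)`, whose sum is `[u,v,w]`.
-/

open MvPolynomial Finset

section Minors

variable {R : Type*} [CommRing R] (x y z : ℕ → R)

/-- The minor `[a,b]` on columns `a, b` of the matrix with rows `x, y`; `minor3` is `[a,b,c]` for
the rows `x, y, z`, expanded along `z`. -/
def minor2 (a b : ℕ) : R := x a * y b - x b * y a

def minor3 (a b c : ℕ) : R :=
  z a * minor2 x y b c - z b * minor2 x y a c + z c * minor2 x y a b

lemma minor2_swap (a b : ℕ) : minor2 x y b a = -minor2 x y a b := by
  simp only [minor2]; ring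

lemma minor3_self (a c : ℕ) : minor3 x y z a a c = 0 := by
  simp only [minor3, minor2]; ring

lemma minor2_mul_minor3_sub_minor2_mul_minor3 (u a b c : ℕ) :
    minor2 x y a b * minor3 x y z u b c - minor2 x y b c * minor3 x y z u a b =
      minor2 x y u b * minor3 x y z a b c := by
  simp only [minor3, minor2]; ring

lemma minor2_mul_minor3_add_minor2_mul_minor3 (u v w c : ℕ) :
    minor2 x y v w * minor3 x y z u v c + minor2 x y u v * minor3 x y z w v c =
      minor2 x y v c * minor3 x y z u v w := by
  simp only [minor3, minor2]; ring

variable (p : ℕ) [ExpChar R p]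

lemma minor2_pow_pow (a b : R) (i j s : ℕ) :
    minor2 (fun n => a ^ p ^ n) (fun n => b ^ p ^ n) i j ^ p ^ s =
      minor2 (fun n => a ^ p ^ n) (fun n => b ^ p ^ n) (i + s) (j + s) := by
  simp only [minor2, sub_pow_expChar_pow, mul_pow, ← pow_mul, ← pow_add]

lemma minor3_pow_pow (a b c : R) (i j k s : ℕ) :
    minor3 (fun n => a ^ p ^ n) (fun n => b ^ p ^ n) (fun n => c ^ p ^ n) i j k ^ p ^ s =
      minor3 (fun n => a ^ p ^ n) (fun n => b ^ p ^ n) (fun n => c ^ p ^ n)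
        (i + s) (j + s) (k + s) := by
  simp only [minor3, minor2, add_pow_expChar_pow, sub_pow_expChar_pow, mul_pow, ← pow_mul,
    ← pow_add]

end Minors

section Telescoping

variable {K : Type*} [Field K] {x y : ℕ → K} (z : ℕ → K)

lemma sum_Ico_minor2_mul_minor3_div (hne : ∀ s, minor2 x y s (s + 1) ≠ 0) (u : ℕ) {a b : ℕ}
    (hab : a ≤ b) :
    ∑ s ∈ Ico a b, minor2 x y u (s + 1) *
        (minor3 x y z s (s + 1) (s + 2) / (minor2 x y s (s + 1) * minor2 x y (s + 1) (s + 2))) =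
      minor3 x y z u b (b + 1) / minor2 x y b (b + 1) -
        minor3 x y z u a (a + 1) / minor2 x y a (a + 1) := by
  rw [← sum_Ico_sub (fun s => minor3 x y z u s (s + 1) / minor2 x y s (s + 1)) hab]
  refine sum_congr rfl fun s _ => ?_
  have h₀ := hne s
  have h₁ := hne (s + 1)
  field_simp
  linear_combination (minor2_mul_minor3_sub_minor2_mul_minor3 x y z u s (s + 1) (s + 2)).symm

theorem minor3_eq_sum_Ico (hne : ∀ s, minor2 x y s (s + 1) ≠ 0) {u v w : ℕ} (huv : u ≤ v)
    (hvw : v ≤ w) :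
    minor3 x y z u v w =
      ∑ s ∈ Ico u v, minor2 x y u (s + 1) * minor2 x y v w * (minor2 x y (s + 1) (s + 2))⁻¹ *
        (minor3 x y z s (s + 1) (s + 2) / minor2 x y s (s + 1)) +
      ∑ s ∈ Ico v w, minor2 x y u v * minor2 x y (s + 1) w * (minor2 x y (s + 1) (s + 2))⁻¹ *
        (minor3 x y z s (s + 1) (s + 2) / minor2 x y s (s + 1)) := by
  have hu := sum_Ico_minor2_mul_minor3_div z hne u huv
  have hw := sum_Ico_minor2_mul_minor3_div z hne w hvw
  rw [minor3_self, zero_div, sub_zero] at hu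
  rw [minor3_self, zero_div, zero_sub] at hw
  have h₁ : ∑ s ∈ Ico u v, minor2 x y u (s + 1) * minor2 x y v w * (minor2 x y (s + 1) (s + 2))⁻¹ *
      (minor3 x y z s (s + 1) (s + 2) / minor2 x y s (s + 1)) =
        minor2 x y v w * (minor3 x y z u v (v + 1) / minor2 x y v (v + 1)) := by
    rw [← hu, mul_sum]
    refine sum_congr rfl fun s _ => ?_
    field_simp
  have h₂ : ∑ s ∈ Ico v w, minor2 x y u v * minor2 x y (s + 1) w * (minor2 x y (s + 1) (s + 2))⁻¹ *
      (minor3 x y z s (s + 1) (s + 2) / minor2 x y s (s + 1)) =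
        minor2 x y u v * (minor3 x y z w v (v + 1) / minor2 x y v (v + 1)) := by
    rw [← neg_neg (_ / _), ← hw, mul_neg, mul_sum, ← sum_neg_distrib]
    refine sum_congr rfl fun s _ => ?_
    rw [minor2_swap x y (s + 1) w]
    field_simp
  have h₃ := hne v
  rw [h₁, h₂]
  field_simp
  linear_combination -minor2_mul_minor3_add_minor2_mul_minor3 x y z u v w (v + 1)

end Telescoping

section Brackets

variable (p : ℕ)

lemma map_br_two {S : Type*} [CommRing S] (f : MvPolynomial (Fin 2) (ZMod p) →+* S) (a b : ℕ) :
    f (br p ![a, b]) = minor2 (fun n => f (X 0) ^ p ^ n) (fun n => f (X 1) ^ p ^ n) a b := by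
  simp only [br, Matrix.det_fin_two, Matrix.of_apply, Matrix.cons_val_zero, Matrix.cons_val_one,
    Matrix.cons_val_fin_one, map_sub, map_mul, map_pow, minor2]

lemma map_br_three {S : Type*} [CommRing S] (f : MvPolynomial (Fin 3) (ZMod p) →+* S)
    (a b c : ℕ) :
    f (br p ![a, b, c]) = minor3 (fun n => f (X 0) ^ p ^ n) (fun n => f (X 1) ^ p ^ n)
      (fun n => f (X 2) ^ p ^ n) a b c := by
  simp only [br, Matrix.det_fin_three, Matrix.of_apply, Matrix.cons_val_zero, Matrix.cons_val_one,
    Matrix.cons_val, map_sub, map_add, map_mul, map_pow, minor3, minor2]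
  ring

lemma Lpoly_two : Lpoly p 2 = br p ![0, 1] := by
  unfold Lpoly; congr 1; funext j; fin_cases j <;> rfl

lemma Lpoly_three : Lpoly p 3 = br p ![0, 1, 2] := by
  unfold Lpoly; congr 1; funext j; fin_cases j <;> rfl

lemma Lpoly_two_ne_zero (hp : 1 < p) : Lpoly p 2 ≠ 0 := by
  have : Nontrivial (ZMod p) := ZMod.nontrivial_iff.mpr hp.ne'
  rw [Lpoly_two, br, Matrix.det_fin_two, sub_ne_zero]
  simp only [Matrix.of_apply, Matrix.cons_val_zero, Matrix.cons_val_one, pow_zero, pow_one, X,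
    monomial_pow, monomial_mul, one_pow, mul_one]
  intro h
  have := congrArg (· 0) (monomial_left_injective one_ne_zero h)
  exact hp.ne (by simpa using this)

end Brackets

theorem stmt13_general (p u v w : ℕ) [hp : Fact p.Prime] (huv : u < v) (hvw : v < w)
    (V3 : MvPolynomial (Fin 3) (ZMod p))
    (hV3 : rename Fin.castSucc (Lpoly p 2) * V3 = Lpoly p 3) :
    (algebraMap (MvPolynomial (Fin 3) (ZMod p))
        (FractionRing (MvPolynomial (Fin 3) (ZMod p)))) (br p ![u, v, w]) =
      (∑ s ∈ Finset.Ico u v,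
        (algebraMap _ _) (rename Fin.castSucc (br p ![u, s + 1])) *
          (algebraMap _ _) (rename (Fin.castSucc : Fin 2 → Fin 3) (br p ![v, w])) *
          ((algebraMap _ _) (rename (Fin.castSucc : Fin 2 → Fin 3) (Lpoly p 2)))⁻¹ ^ p ^ (s + 1) *
          (algebraMap _ _) V3 ^ p ^ s) +
      ∑ s ∈ Finset.Ico v w,
        (algebraMap _ _) (rename (Fin.castSucc : Fin 2 → Fin 3) (br p ![u, v])) *
          (algebraMap _ _) (rename (Fin.castSucc : Fin 2 → Fin 3) (br p ![s + 1, w])) *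
          ((algebraMap _ _) (rename (Fin.castSucc : Fin 2 → Fin 3) (Lpoly p 2)))⁻¹ ^ p ^ (s + 1) *
          (algebraMap _ _) V3 ^ p ^ s := by
  set A := algebraMap (MvPolynomial (Fin 3) (ZMod p)) (FractionRing (MvPolynomial (Fin 3) (ZMod p)))
  set x : ℕ → FractionRing (MvPolynomial (Fin 3) (ZMod p)) := fun n => A (X 0) ^ p ^ n
  set y : ℕ → FractionRing (MvPolynomial (Fin 3) (ZMod p)) := fun n => A (X 1) ^ p ^ n
  set z : ℕ → FractionRing (MvPolynomial (Fin 3) (ZMod p)) := fun n => A (X 2) ^ p ^ n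
  have hB : ∀ a b, A (rename Fin.castSucc (br p ![a, b])) = minor2 x y a b := fun a b => by
    simpa using map_br_two p (A.comp (rename Fin.castSucc).toRingHom) a b
  have hL : ∀ s, A (rename Fin.castSucc (Lpoly p 2)) ^ p ^ s = minor2 x y s (s + 1) := fun s => by
    rw [Lpoly_two, hB, minor2_pow_pow, zero_add, add_comm 1]
  have hne : ∀ s, minor2 x y s (s + 1) ≠ 0 := fun s => hL s ▸ pow_ne_zero _ (by
    rw [Ne, map_eq_zero_iff _ (IsFractionRing.injective _ _),
      map_eq_zero_iff _ (rename_injective _ (Fin.castSucc_injective 2))]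
    exact Lpoly_two_ne_zero p hp.out.one_lt)
  have hV : ∀ s, A V3 ^ p ^ s = minor3 x y z s (s + 1) (s + 2) / minor2 x y s (s + 1) := fun s => by
    rw [eq_div_iff (hne s), ← hL, ← mul_pow, mul_comm, ← map_mul, hV3, Lpoly_three,
      map_br_three, minor3_pow_pow, zero_add, add_comm 1, add_comm 2]
  rw [map_br_three]
  simp only [hB, inv_pow, hL, hV]
  exact minor3_eq_sum_Ico z hne huv.le hvw.le

/-- For `0 ≤ u < v < w`, in the fraction field of `F_p[y₁,y₂,y₃]`:
`[u,v,w] = Σ_{s=u}^{v-1} [u,s+1][v,w] L₂^{−p^{s+1}} V₃^{p^s}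
         + Σ_{s=v}^{w-1} [u,v][s+1,w] L₂^{−p^{s+1}} V₃^{p^s}`,
where `[a,b]`, `L₂` are 2×2 determinants in `y₁,y₂` and `V₃ = L₃/L₂`. -/
theorem stmt13 (p u v w : ℕ) [hp : Fact p.Prime] (hodd : Odd p) (huv : u < v) (hvw : v < w)
    (V3 : MvPolynomial (Fin 3) (ZMod p))
    (hV3 : rename Fin.castSucc (Lpoly p 2) * V3 = Lpoly p 3) :
    (algebraMap (MvPolynomial (Fin 3) (ZMod p))
        (FractionRing (MvPolynomial (Fin 3) (ZMod p)))) (br p ![u, v, w]) =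
      (∑ s ∈ Finset.Ico u v,
        (algebraMap _ _) (rename Fin.castSucc (br p ![u, s + 1])) *
          (algebraMap _ _) (rename (Fin.castSucc : Fin 2 → Fin 3) (br p ![v, w])) *
          ((algebraMap _ _) (rename (Fin.castSucc : Fin 2 → Fin 3) (Lpoly p 2)))⁻¹ ^ p ^ (s + 1) *
          (algebraMap _ _) V3 ^ p ^ s) +
      ∑ s ∈ Finset.Ico v w,
        (algebraMap _ _) (rename (Fin.castSucc : Fin 2 → Fin 3) (br p ![u, v])) *
          (algebraMap _ _) (rename (Fin.castSucc : Fin 2 → Fin 3) (br p ![s + 1, w])) *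
          ((algebraMap _ _) (rename (Fin.castSucc : Fin 2 → Fin 3) (Lpoly p 2)))⁻¹ ^ p ^ (s + 1) *
          (algebraMap _ _) V3 ^ p ^ s :=
  stmt13_general p u v w (hp := hp) huv hvw V3 hV3
end

section
/- Let p be an odd prime and 0 ≤ u < v. In F_p[y_1,y_2,y_3]: [u,v+3,v+4] = [u,v+2,v+3] · Q_{3,1}^{p^{v+1}} − [u,v+1,v+2] · Q_{3,0}^{p^{v+1}} · Q_{3,2}^{p^v} + [u,v,v+1] · Q_{3,0}^{p^{v+1}+p^v}, where Q_{3,s} are the Dickson invariants in three variables. -/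
open MvPolynomial Finset

theorem base (p : ℕ) (Q : Fin 3 → MvPolynomial (Fin 3) (ZMod p))
    (hQ : ∀ s : Fin 3, Lpoly p 3 * Q s = Ls p 3 (s : ℕ)) (i : Fin 3) :
    Lpoly p 3 * (X i ^ p ^ 3) =
      Lpoly p 3 * (Q 2 * X i ^ p ^ 2 - Q 1 * X i ^ p ^ 1 + Q 0 * X i ^ p ^ 0) := by
  calc Lpoly p 3 * (X i ^ p ^ 3)
      = Ls p 3 2 * X i ^ p ^ 2 - Ls p 3 1 * X i ^ p ^ 1 + Ls p 3 0 * X i ^ p ^ 0 := by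
        simp only [Lpoly, Ls, br, Matrix.det_fin_three, Matrix.of_apply]
        norm_num
        fin_cases i <;>
          simp only [show (⟨0, by omega⟩ : Fin 3) = 0 from rfl,
            show (⟨1, by omega⟩ : Fin 3) = 1 from rfl,
            show (⟨2, by omega⟩ : Fin 3) = 2 from rfl] <;> ring
    _ = Lpoly p 3 * (Q 2 * X i ^ p ^ 2 - Q 1 * X i ^ p ^ 1 + Q 0 * X i ^ p ^ 0) := by
        rw [mul_add, mul_sub, ← mul_assoc, ← mul_assoc, ← mul_assoc, hQ 2, hQ 1, hQ 0]
        norm_num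
theorem Lne (p : ℕ) (hp : p.Prime) : Lpoly p 3 ≠ 0 := by
  haveI := Fact.mk hp
  have h1 : 1 < p := hp.one_lt
  have h2 : p < p ^ 2 := by nlinarith
  have h3 : 1 < p ^ 2 := by nlinarith
  intro h
  have := congrArg (coeff (Finsupp.single 0 1 + Finsupp.single 1 p + Finsupp.single 2 (p^2))) h
  simp [Lpoly, br, Matrix.det_fin_three, X_pow_eq_monomial, monomial_mul, coeff_monomial,
    Finsupp.ext_iff, Fin.forall_fin_succ, Finsupp.single_apply,
    h1.ne, h1.ne', h2.ne, h2.ne', h3.ne, h3.ne'] at this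

theorem rel (p : ℕ) (hp : p.Prime) (Q : Fin 3 → MvPolynomial (Fin 3) (ZMod p))
    (hQ : ∀ s : Fin 3, Lpoly p 3 * Q s = Ls p 3 (s : ℕ)) (i : Fin 3) (k : ℕ) :
    X i ^ p ^ (k + 3) =
      (Q 2) ^ p ^ k * X i ^ p ^ (k + 2) - (Q 1) ^ p ^ k * X i ^ p ^ (k + 1)
        + (Q 0) ^ p ^ k * X i ^ p ^ k := by
  haveI := Fact.mk hp
  have h := mul_left_cancel₀ (Lne p hp) (base p Q hQ i)
  have h2 := congrArg (· ^ p ^ k) h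
  simp only [← pow_mul, add_pow_char_pow, sub_pow_char_pow, mul_pow] at h2
  calc X i ^ p ^ (k + 3) = X i ^ (p ^ 3 * p ^ k) := by rw [← pow_add]; ring_nf
    _ = _ := by
        rw [h2, ← pow_add, ← pow_add, ← pow_add]
        ring_nf
/-- For `0 ≤ u < v`, in `F_p[y₁,y₂,y₃]`:
`[u,v+3,v+4] = [u,v+2,v+3]·Q_{3,1}^{p^{v+1}} − [u,v+1,v+2]·Q_{3,0}^{p^{v+1}}·Q_{3,2}^{p^v}
  + [u,v,v+1]·Q_{3,0}^{p^{v+1}+p^v}`, where `Q_{3,s}` are the Dickson invariants. -/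
theorem stmt14 (p u v : ℕ) (hp : p.Prime) (hodd : Odd p) (huv : u < v)
    (Q : Fin 3 → MvPolynomial (Fin 3) (ZMod p))
    (hQ : ∀ s : Fin 3, Lpoly p 3 * Q s = Ls p 3 (s : ℕ)) :
    br p ![u, v + 3, v + 4] =
      br p ![u, v + 2, v + 3] * (Q 1) ^ p ^ (v + 1) -
        br p ![u, v + 1, v + 2] * (Q 0) ^ p ^ (v + 1) * (Q 2) ^ p ^ v +
        br p ![u, v, v + 1] * (Q 0) ^ (p ^ (v + 1) + p ^ v) := by
  have r3 : ∀ i : Fin 3, X i ^ p ^ (v + 3) =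
      (Q 2) ^ p ^ v * X i ^ p ^ (v + 2) - (Q 1) ^ p ^ v * X i ^ p ^ (v + 1)
        + (Q 0) ^ p ^ v * X i ^ p ^ v := fun i => rel p hp Q hQ i v
  have r4 : ∀ i : Fin 3, X i ^ p ^ (v + 4) =
      (Q 2) ^ p ^ (v + 1) * X i ^ p ^ (v + 3) - (Q 1) ^ p ^ (v + 1) * X i ^ p ^ (v + 2)
        + (Q 0) ^ p ^ (v + 1) * X i ^ p ^ (v + 1) := fun i => rel p hp Q hQ i (v + 1)
  simp only [br, Matrix.det_fin_three, Matrix.of_apply, Matrix.cons_val', Matrix.cons_val_zero,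
    Matrix.cons_val_one, Matrix.head_cons, Matrix.cons_val_fin_one, Matrix.empty_val',
    Matrix.head_fin_const, Matrix.cons_val_two, Matrix.tail_cons]
  rw [r4 0, r4 1, r4 2, r3 0, r3 1, r3 2]
  ring
end

section
/- Let p be an odd prime and 0 ≤ u < v. With I(u,v) the set of nonnegative integers a such that the base-p digits satisfy α_i(a)+α_{i+1}(a) ≤ 1 for all i and α_i(a)=0 for i < u or i ≥ v−2, one has the disjoint decomposition I(u,v+2) = I(u,v+1) ∪ (p^{v-1} + I(u,v)), where p^{v-1}+I(u,v) = {p^{v-1}+a : a ∈ I(u,v)}. -/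
/-- `α_i(a)`: the `i`-th digit in the base-`p` expansion of `a`. -/
def alphaDigit (p a i : ℕ) : ℕ := a / p ^ i % p

/-- `I(u,v)`: nonnegative integers `a` with `α_i(a)+α_{i+1}(a) ≤ 1` for all `i`, and
`α_i(a) = 0` for `i < u` or `i ≥ v-2`. -/
def Iset (p u v : ℕ) : Set ℕ :=
  {a | (∀ i, alphaDigit p a i + alphaDigit p a (i + 1) ≤ 1) ∧
    ∀ i, (i < u ∨ v - 2 ≤ i) → alphaDigit p a i = 0}

lemma alpha_zero_of_lt {p a n i : ℕ} (hp : 1 < p) (h : a < p ^ n) (hni : n ≤ i) :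
    alphaDigit p a i = 0 := by
  have hd : a / p ^ i = 0 :=
    Nat.div_eq_of_lt (lt_of_lt_of_le h (Nat.pow_le_pow_right (by omega) hni))
  simp [alphaDigit, hd]

lemma lt_of_alpha_zero {p a n : ℕ} (hp : 1 < p)
    (h : ∀ i, n ≤ i → alphaDigit p a i = 0) : a < p ^ n := by
  by_contra hlt
  push_neg at hlt
  have hpn : 0 < p ^ n := by positivity
  have ha : a ≠ 0 := by omega
  set m := Nat.log p a with hm
  have h1 : p ^ m ≤ a := Nat.pow_log_le_self p ha
  have h2 : a < p ^ (m + 1) := Nat.lt_pow_succ_log_self hp a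
  have hnm : n ≤ m := by
    by_contra hc
    push_neg at hc
    have : p ^ (m + 1) ≤ p ^ n := Nat.pow_le_pow_right (by omega) (by omega)
    omega
  have hd := h m hnm
  have hq : a / p ^ m < p := by
    rw [Nat.div_lt_iff_lt_mul (by positivity)]
    have : p ^ (m + 1) = p * p ^ m := by ring
    omega
  rw [alphaDigit, Nat.mod_eq_of_lt hq] at hd
  have : 1 ≤ a / p ^ m := (Nat.one_le_div_iff (by positivity)).mpr h1
  omega

lemma alpha_add_pow_lt {p b k i : ℕ} (hp : 0 < p) (hi : i < k) :
    alphaDigit p (p ^ k + b) i = alphaDigit p b i := by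
  have hk : p ^ k = p ^ i * (p * p ^ (k - i - 1)) := by
    have h : i + (1 + (k - i - 1)) = k := by omega
    have h2 : p ^ (i + (1 + (k - i - 1))) = p ^ i * (p * p ^ (k - i - 1)) := by
      rw [pow_add, pow_add, pow_one]
    rw [← h2, h]
  unfold alphaDigit
  rw [add_comm (p ^ k) b, hk, Nat.add_mul_div_left _ _ (by positivity),
    Nat.add_mul_mod_self_left]

lemma alpha_add_pow_self {p b k : ℕ} (hp : 1 < p) (hb : b < p ^ k) :
    alphaDigit p (p ^ k + b) k = 1 := by
  unfold alphaDigit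
  have h1 : (b + p ^ k * 1) / p ^ k = b / p ^ k + 1 :=
    Nat.add_mul_div_left _ _ (by positivity)
  have hb0 : b / p ^ k = 0 := Nat.div_eq_of_lt hb
  rw [add_comm (p ^ k) b]
  rw [mul_one] at h1
  rw [h1, hb0]
  simp [Nat.mod_eq_of_lt hp]

lemma alpha_add_pow_gt {p b k i : ℕ} (hp : 1 < p) (hb : b < p ^ k) (hi : k < i) :
    alphaDigit p (p ^ k + b) i = 0 := by
  apply alpha_zero_of_lt hp (n := k + 1) _ hi
  have h2 : 2 * p ^ k ≤ p * p ^ k := Nat.mul_le_mul_right _ hp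
  have : p ^ (k + 1) = p * p ^ k := by ring
  omega

/-- For `0 ≤ u < v`: `I(u,v+2) = I(u,v+1) ∪ (p^{v-1} + I(u,v))`, a disjoint union. -/
theorem stmt16 (p u v : ℕ) (hp : p.Prime) (hodd : Odd p) (huv : u < v) :
    Iset p u (v + 2) = Iset p u (v + 1) ∪ ((fun a => p ^ (v - 1) + a) '' Iset p u v) ∧
      Disjoint (Iset p u (v + 1)) ((fun a => p ^ (v - 1) + a) '' Iset p u v) := by
  have hp1 : 1 < p := hp.one_lt
  obtain ⟨k, rfl⟩ : ∃ k, v = k + 1 := ⟨v - 1, by omega⟩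
  simp only [Nat.add_sub_cancel]
  constructor
  · ext a
    simp only [Set.mem_union, Set.mem_image, Iset, Set.mem_setOf_eq]
    constructor
    · rintro ⟨h1, h2⟩
      by_cases hz : alphaDigit p a k = 0
      · left
        refine ⟨h1, fun i hi => ?_⟩
        rcases hi with hi | hi
        · exact h2 i (Or.inl hi)
        · rcases Nat.eq_or_lt_of_le (show k ≤ i by omega) with rfl | hik
          · exact hz
          · exact h2 i (Or.inr (by omega))
      · right
        have hak : alphaDigit p a k = 1 := by
          have := h1 k
          omega
        have halt : a < p ^ (k + 1) := by
          apply lt_of_alpha_zero hp1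
          intro i hi
          exact h2 i (Or.inr (by omega))
        have hq : a / p ^ k = 1 := by
          have hlt : a / p ^ k < p := by
            rw [Nat.div_lt_iff_lt_mul (by positivity)]
            have : p ^ (k + 1) = p * p ^ k := by ring
            omega
          have h := hak
          rwa [alphaDigit, Nat.mod_eq_of_lt hlt] at h
        set b := a % p ^ k with hbdef
        have hbe : a = p ^ k + b := by
          conv_lhs => rw [← Nat.div_add_mod a (p ^ k)]
          rw [hq, mul_one]
        have hblt : b < p ^ k := Nat.mod_lt _ (by positivity)
        have hdig : ∀ i, i < k → alphaDigit p b i = alphaDigit p a i := by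
          intro i hi
          rw [hbe, alpha_add_pow_lt (by omega) hi]
        have hdigz : ∀ i, k ≤ i → alphaDigit p b i = 0 := fun i hi =>
          alpha_zero_of_lt hp1 hblt hi
        have hle : ∀ j, alphaDigit p b j ≤ alphaDigit p a j := by
          intro j
          rcases lt_or_ge j k with h | h
          · rw [hdig j h]
          · rw [hdigz j h]; exact Nat.zero_le _
        refine ⟨b, ⟨fun i => ?_, fun i hi => ?_⟩, hbe.symm⟩
        · have := h1 i
          have := hle i
          have := hle (i + 1)
          omega
        · rcases hi with hi | hi
          · rw [hdig i (by omega)]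
            exact h2 i (Or.inl hi)
          · rcases lt_or_ge i k with h | h
            · have hik : i + 1 = k := by omega
              rw [hdig i h]
              have hadj := h1 i
              rw [hik] at hadj
              omega
            · exact hdigz i h
    · rintro (⟨h1, h2⟩ | ⟨b, ⟨h1, h2⟩, rfl⟩)
      · exact ⟨h1, fun i hi => h2 i (by omega)⟩
      · have hblt : b < p ^ k :=
          lt_of_alpha_zero hp1 (fun i hi => h2 i (Or.inr (by omega)))
        have d1 : ∀ i, i < k → alphaDigit p (p ^ k + b) i = alphaDigit p b i :=
          fun i hi => alpha_add_pow_lt (by omega) hi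
        have d2 : alphaDigit p (p ^ k + b) k = 1 := alpha_add_pow_self hp1 hblt
        have d3 : ∀ i, k < i → alphaDigit p (p ^ k + b) i = 0 :=
          fun i hi => alpha_add_pow_gt hp1 hblt hi
        constructor
        · intro i
          rcases lt_trichotomy (i + 1) k with h | h | h
          · rw [d1 i (by omega), d1 (i + 1) h]
            exact h1 i
          · have hbz : alphaDigit p b i = 0 := h2 i (Or.inr (by omega))
            rw [d1 i (by omega), hbz, h, d2]
          · rcases lt_trichotomy i k with hik | hik | hik
            · omega
            · subst hik
              rw [d2, d3 (i + 1) (by omega)]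
            · rw [d3 i hik, d3 (i + 1) (by omega)]
              omega
        · intro i hi
          rcases hi with hi | hi
          · rw [d1 i (by omega)]
            exact h2 i (Or.inl hi)
          · exact d3 i (by omega)
  · rw [Set.disjoint_left]
    rintro a ⟨h1, h2⟩ ⟨b, ⟨hb1, hb2⟩, heq⟩
    have hblt : b < p ^ k :=
      lt_of_alpha_zero hp1 (fun i hi => hb2 i (Or.inr (by omega)))
    have hz : alphaDigit p a k = 0 := h2 k (Or.inr (by omega))
    simp only at heq
    rw [← heq, alpha_add_pow_self hp1 hblt] at hz
    omega
end

section
/- Let p be an odd prime and 0 ≤ u < v. Let J(u,v) be the set of nonnegative integers a whose base-p digits satisfy α_i(a) ≤ 1 and α_i(a)+α_{i+1}(a)+α_{i+2}(a) ≤ 2 for all i, and α_i(a) = 0 for i < u or i ≥ v−2. Then J(u,v+3) = J(u,v+2) ∪ (p^v + J(u,v+1)) ∪ (p^v + p^{v-1} + J(u,v)), a disjoint union. -/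
/-- `J(u,v)`: nonnegative integers `a` with `α_i(a) ≤ 1` and
`α_i(a)+α_{i+1}(a)+α_{i+2}(a) ≤ 2` for all `i`, and `α_i(a) = 0` for `i < u` or `i ≥ v-2`. -/
def Jset (p u v : ℕ) : Set ℕ :=
  {a | (∀ i, alphaDigit p a i ≤ 1) ∧
    (∀ i, alphaDigit p a i + alphaDigit p a (i + 1) + alphaDigit p a (i + 2) ≤ 2) ∧
    ∀ i, (i < u ∨ v - 2 ≤ i) → alphaDigit p a i = 0}

/-! Split `a ∈ J(u,v+3)` by its top admissible digits: `α_v(a) = 0` puts `a` in `J(u,v+2)`;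
`α_v(a) = 1, α_{v-1}(a) = 0` gives `a = p^v + r` with `r ∈ J(u,v+1)`; and `α_v(a) = α_{v-1}(a) = 1`
forces `α_{v-2}(a) = 0`, so `a = p^v + p^{v-1} + r` with `r ∈ J(u,v)`. Conversely, prepending these
digits keeps every window sum at most `2`. The three pieces are disjoint already by size:
`J(u,v+2) < p^v ≤ p^v + J(u,v+1) < p^v + p^{v-1}`. -/

section Digits

variable {p a r k i : ℕ}

theorem alphaDigit_eq_zero_of_lt_pow (hp : 0 < p) (h : a < p ^ k) (hi : k ≤ i) :
    alphaDigit p a i = 0 := by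
  rw [alphaDigit, Nat.div_eq_of_lt (h.trans_le (Nat.pow_le_pow_right hp hi)), Nat.zero_mod]

theorem lt_pow_of_alphaDigit_eq_zero (hp : 1 < p) (h : ∀ i, k ≤ i → alphaDigit p a i = 0) :
    a < p ^ k := by
  by_contra! hle
  have ha : a ≠ 0 := by have := Nat.one_le_pow k p (by omega); omega
  have hpos : 0 < p ^ Nat.log p a := by positivity
  have hdigit := h _ (Nat.le_log_of_pow_le hp hle)
  rw [alphaDigit, Nat.mod_eq_of_lt] at hdigit
  · exact (Nat.div_pos (Nat.pow_log_le_self p ha) hpos).ne' hdigit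
  · rw [Nat.div_lt_iff_lt_mul hpos, ← pow_succ']
    exact Nat.lt_pow_succ_log_self hp a

theorem alphaDigit_pow_mul_add (hp : 0 < p) (hr : r < p ^ k) (q i : ℕ) :
    alphaDigit p (p ^ k * q + r) i = if i < k then alphaDigit p r i else alphaDigit p q (i - k) := by
  split_ifs with hik
  · obtain ⟨j, rfl⟩ : ∃ j, k = i + (j + 1) := ⟨k - i - 1, by omega⟩
    rw [alphaDigit, alphaDigit, pow_add, mul_assoc, Nat.mul_add_div (by positivity), pow_succ',
      mul_assoc, Nat.mul_add_mod]
  · rw [alphaDigit, alphaDigit, show p ^ i = p ^ k * p ^ (i - k) by rw [← pow_add]; congr; omega,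
      ← Nat.div_div_eq_div_mul, Nat.mul_add_div (by positivity), Nat.div_eq_of_lt hr, add_zero]

theorem alphaDigit_pow_add (hp : 1 < p) (hr : r < p ^ k) (i : ℕ) :
    alphaDigit p (p ^ k + r) i = if i < k then alphaDigit p r i else if i = k then 1 else 0 := by
  rw [← mul_one (p ^ k), alphaDigit_pow_mul_add (by omega) hr]
  split_ifs with hik hk
  · rfl
  · rw [hk, Nat.sub_self, alphaDigit, pow_zero, Nat.div_one, Nat.mod_eq_of_lt hp]
  · exact alphaDigit_eq_zero_of_lt_pow (k := 1) (by omega) (by rwa [pow_one]) (by omega)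

theorem alphaDigit_mod_pow (hp : 0 < p) (a i : ℕ) :
    alphaDigit p (a % p ^ k) i = if i < k then alphaDigit p a i else 0 := by
  split_ifs with hik
  · have h := alphaDigit_pow_mul_add hp (Nat.mod_lt a (pow_pos hp k)) (a / p ^ k) i
    rwa [Nat.div_add_mod, if_pos hik, eq_comm] at h
  · exact alphaDigit_eq_zero_of_lt_pow hp (Nat.mod_lt a (pow_pos hp k)) (not_lt.1 hik)

theorem pow_add_mod_pow_of_alphaDigit_eq_one (hp : 1 < p) (ha : a < p ^ (k + 1))
    (hk : alphaDigit p a k = 1) : p ^ k + a % p ^ k = a := by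
  have hlt : a / p ^ k < p := by
    rwa [Nat.div_lt_iff_lt_mul (by positivity), ← pow_succ']
  rw [alphaDigit, Nat.mod_eq_of_lt hlt] at hk
  conv_rhs => rw [← Nat.div_add_mod a (p ^ k), hk, mul_one]

end Digits

section Jset

variable {p u a r k m w w' : ℕ}

theorem Jset_mono : Monotone (Jset p u) :=
  fun _ _ hw _ ⟨hle, hsum, hzero⟩ => ⟨hle, hsum, fun i hi => hzero i (hi.imp_right (by omega))⟩

theorem lt_pow_of_mem_Jset (hp : 1 < p) (ha : a ∈ Jset p u (k + 2)) : a < p ^ k :=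
  lt_pow_of_alphaDigit_eq_zero hp fun i hi => ha.2.2 i (Or.inr (by omega))

theorem mod_pow_mem_Jset (hp : 0 < p) (ha : a ∈ Jset p u w)
    (htop : ∀ i < k, w' - 2 ≤ i → alphaDigit p a i = 0) : a % p ^ k ∈ Jset p u w' := by
  obtain ⟨hle, hsum, hzero⟩ := ha
  simp only [Jset, Set.mem_ofPred_eq, alphaDigit_mod_pow hp]
  refine ⟨fun i => ?_, fun i => ?_, fun i hi => ?_⟩
  · split_ifs
    exacts [hle i, zero_le_one]
  · have := hsum i
    split_ifs <;> omega
  · split_ifs with hik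
    · exact hi.elim (fun hiu => hzero i (Or.inl hiu)) (htop i hik)
    · rfl

theorem pow_add_mem_Jset (hp : 1 < p) (hu : u ≤ k) (hr : r ∈ Jset p u (k + 2))
    (hjoin : ∀ i, i + 2 = k → alphaDigit p r i + alphaDigit p r (i + 1) ≤ 1) :
    p ^ k + r ∈ Jset p u (k + 3) := by
  have hlt := lt_pow_of_mem_Jset hp hr
  obtain ⟨hle, hsum, hzero⟩ := hr
  simp only [Jset, Set.mem_ofPred_eq, alphaDigit_pow_add hp hlt]
  refine ⟨fun i => ?_, fun i => ?_, fun i hi => ?_⟩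
  · split_ifs
    exacts [hle i, le_rfl, zero_le_one]
  · have := hsum i; have := hle i; have := hle (i + 1); have := hjoin i
    split_ifs <;> omega
  · split_ifs
    · exact hzero i (hi.imp_right (by omega))
    · omega
    · rfl

theorem Jset_add_four_subset (hp : 1 < p) :
    Jset p u (m + 4) ⊆ Jset p u (m + 3) ∪ (fun a => p ^ (m + 1) + a) '' Jset p u (m + 2) ∪
      (fun a => p ^ (m + 1) + p ^ m + a) '' Jset p u (m + 1) := by
  intro a ha
  have hlt : a < p ^ (m + 2) := lt_pow_of_mem_Jset hp ha
  obtain ⟨hle, hsum, hzero⟩ := id ha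
  obtain htop | htop : alphaDigit p a (m + 1) = 0 ∨ alphaDigit p a (m + 1) = 1 := by
    have := hle (m + 1); omega
  · refine .inl (.inl ⟨hle, hsum, fun i hi => ?_⟩)
    rcases eq_or_ne i (m + 1) with rfl | hne
    exacts [htop, hzero i (hi.imp_right (by omega))]
  have hsplit := pow_add_mod_pow_of_alphaDigit_eq_one hp hlt htop
  obtain hnext | hnext : alphaDigit p a m = 0 ∨ alphaDigit p a m = 1 := by
    have := hle m; omega
  · refine .inl (.inr ⟨_, mod_pow_mem_Jset (by omega) ha fun i _ _ => ?_, hsplit⟩)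
    obtain rfl : i = m := by omega
    exact hnext
  · refine .inr ⟨a % p ^ m, mod_pow_mem_Jset (by omega) ha fun i _ _ => ?_, ?_⟩
    · obtain rfl : m = i + 1 := by omega
      have := hsum i
      rw [show i + 1 + 1 = i + 2 from rfl] at htop
      omega
    · have hsplit' : p ^ m + a % p ^ (m + 1) % p ^ m = a % p ^ (m + 1) :=
        pow_add_mod_pow_of_alphaDigit_eq_one hp (Nat.mod_lt _ (by positivity))
          (by rw [alphaDigit_mod_pow (by omega), if_pos m.lt_succ_self, hnext])
      rw [Nat.mod_mod_of_dvd _ (pow_dvd_pow p m.le_succ)] at hsplit'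
      dsimp only
      rw [add_assoc, hsplit', hsplit]

theorem union_subset_Jset_add_four (hp : 1 < p) (hu : u ≤ m) :
    Jset p u (m + 3) ∪ (fun a => p ^ (m + 1) + a) '' Jset p u (m + 2) ∪
      (fun a => p ^ (m + 1) + p ^ m + a) '' Jset p u (m + 1) ⊆ Jset p u (m + 4) := by
  rintro _ ((ha | ⟨r, hr, rfl⟩) | ⟨r, hr, rfl⟩)
  · exact Jset_mono (by omega) ha
  · refine pow_add_mem_Jset hp (by omega) (Jset_mono (by omega) hr) fun i hi => ?_
    have := hr.1 i; have := hr.2.2 (i + 1) (Or.inr (by omega))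
    omega
  · have hlt : r < p ^ m := lt_pow_of_mem_Jset hp (Jset_mono (by omega) hr)
    have hr' : p ^ m + r ∈ Jset p u (m + 3) :=
      pow_add_mem_Jset hp hu (Jset_mono (by omega) hr) fun i hi => by
        have := hr.1 i; have := hr.2.2 (i + 1) (Or.inr (by omega))
        omega
    dsimp only
    rw [add_assoc]
    refine pow_add_mem_Jset hp (by omega) hr' fun i hi => ?_
    rw [alphaDigit_pow_add hp hlt, alphaDigit_pow_add hp hlt]
    have := hr.2.2 i (Or.inr (by omega))
    split_ifs <;> omega

end Jset

theorem stmt17_general (p u v : ℕ) (hp : p.Prime) (huv : u < v) :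
    Jset p u (v + 3) =
        Jset p u (v + 2) ∪ ((fun a => p ^ v + a) '' Jset p u (v + 1)) ∪
          ((fun a => p ^ v + p ^ (v - 1) + a) '' Jset p u v) ∧
      Disjoint (Jset p u (v + 2)) ((fun a => p ^ v + a) '' Jset p u (v + 1)) ∧
      Disjoint (Jset p u (v + 2)) ((fun a => p ^ v + p ^ (v - 1) + a) '' Jset p u v) ∧
      Disjoint ((fun a => p ^ v + a) '' Jset p u (v + 1))
        ((fun a => p ^ v + p ^ (v - 1) + a) '' Jset p u v) := by
  obtain ⟨m, rfl⟩ : ∃ m, v = m + 1 := ⟨v - 1, by omega⟩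
  have hp1 := hp.one_lt
  simp only [Nat.add_sub_cancel]
  refine ⟨(Jset_add_four_subset hp1).antisymm (union_subset_Jset_add_four hp1 (by omega)),
    ?_, ?_, ?_⟩ <;> rw [Set.disjoint_left]
  · rintro _ ha ⟨r, -, rfl⟩
    have := lt_pow_of_mem_Jset hp1 ha
    dsimp only at this
    omega
  · rintro _ ha ⟨r, -, rfl⟩
    have := lt_pow_of_mem_Jset hp1 ha
    dsimp only at this
    omega
  · rintro _ ⟨r, hr, rfl⟩ ⟨s, -, hs⟩
    have := lt_pow_of_mem_Jset hp1 hr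
    dsimp only at hs
    omega

/-- For `0 ≤ u < v`:
`J(u,v+3) = J(u,v+2) ∪ (p^v + J(u,v+1)) ∪ (p^v + p^{v-1} + J(u,v))`, a disjoint union. -/
theorem stmt17 (p u v : ℕ) (hp : p.Prime) (hodd : Odd p) (huv : u < v) :
    Jset p u (v + 3) =
        Jset p u (v + 2) ∪ ((fun a => p ^ v + a) '' Jset p u (v + 1)) ∪
          ((fun a => p ^ v + p ^ (v - 1) + a) '' Jset p u v) ∧
      Disjoint (Jset p u (v + 2)) ((fun a => p ^ v + a) '' Jset p u (v + 1)) ∧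
      Disjoint (Jset p u (v + 2)) ((fun a => p ^ v + p ^ (v - 1) + a) '' Jset p u v) ∧
      Disjoint ((fun a => p ^ v + a) '' Jset p u (v + 1))
        ((fun a => p ^ v + p ^ (v - 1) + a) '' Jset p u v) :=
  stmt17_general p u v hp huv
end

section
/- Let p be an odd prime. Define the total Steenrod operation on F_p[y_1,...,y_n] as the F_p-algebra homomorphism P_t: F_p[y_1,...,y_n] → F_p[y_1,...,y_n][t] with P_t(y_i) = y_i + y_i^p t, and write P^r for the coefficient of t^r (suitably graded so that P^r raises degree by 2r(p−1) when dim y_i = 2). Then for a sequence (e_1,...,e_n) of pairwise distinct nonnegative integers and r ≥ 0: P^r[e_1,...,e_n] = [e_1+ε_1, ..., e_n+ε_n] if r = Σ_j ε_j p^{e_j} for some ε_j ∈ {0,1} (such a representation being unique), and P^r[e_1,...,e_n] = 0 if r admits no such representation. -/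
open MvPolynomial Finset

/-- The total Steenrod operation `P_t`: the `F_p`-algebra homomorphism with
`P_t(y_i) = y_i + y_i^p t`.  The Steenrod operation `P^r` is the coefficient of `t^r`. -/
noncomputable def Pt (p n : ℕ) :
    MvPolynomial (Fin n) (ZMod p) →ₐ[ZMod p]
      Polynomial (MvPolynomial (Fin n) (ZMod p)) :=
  aeval (fun i : Fin n =>
    Polynomial.C (X i) + Polynomial.C ((X i : MvPolynomial (Fin n) (ZMod p)) ^ p) * Polynomial.X)

/-! Since `P_t` is a ring homomorphism and Frobenius is additive in characteristic `p`,
`P_t(y_i^{p^k}) = y_i^{p^k} + y_i^{p^{k+1}} t^{p^k}`. Expanding the determinant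
`[e_1,…,e_n]` column by column therefore gives
`P_t[e_1,…,e_n] = Σ_ε [e_1+ε_1,…,e_n+ε_n] t^{Σ_j ε_j p^{e_j}}` over `ε ∈ {0,1}^n`, and since the
`e_j` are distinct, uniqueness of base-`p` expansions makes the exponents pairwise distinct. -/

lemma injective_sum_ite_pow {ι : Type*} [Fintype ι] {p : ℕ} (hp : 2 ≤ p) {e : ι → ℕ}
    (he : Function.Injective e) :
    Function.Injective fun ε : ι → Bool => ∑ j, if ε j then p ^ e j else 0 := by
  classical
  have hsum : ∀ ε : ι → Bool, (∑ j, if ε j then p ^ e j else 0) =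
      ∑ k ∈ ({j | ε j} : Finset ι).image e, p ^ k := fun ε => by
    rw [sum_image fun _ _ _ _ h => he h, sum_filter]
  intro ε ε' h
  simp only [hsum] at h
  have hsupp := image_injective he (geomSum_injective hp h)
  funext j
  simpa using congrArg (j ∈ ·) hsupp

lemma Matrix.det_of_sum_col {ι β R : Type*} [Fintype ι] [DecidableEq ι] [Fintype β]
    [CommRing R] (g : ι → β → ι → R) :
    (Matrix.of fun i j => ∑ b, g j b i).det =
      ∑ ε : ι → β, (Matrix.of fun i j => g j (ε j) i).det := by
  have hrows : (Matrix.of fun i j => ∑ b, g j b i).transpose = fun j => ∑ b, g j b := by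
    ext j i
    simp
  rw [← Matrix.det_transpose, hrows]
  refine ((Matrix.detRowAlternating : (ι → R) [⋀^ι]→ₗ[R] R).toMultilinearMap.map_sum g).trans
    (sum_congr rfl fun ε _ => ?_)
  rw [← Matrix.det_transpose]
  rfl

lemma Polynomial.coeff_sum_monomial_apply {α R : Type*} [Fintype α] [Semiring R] {d : α → ℕ}
    (hd : Function.Injective d) (c : α → R) (a : α) :
    (∑ b, monomial (d b) (c b)).coeff (d a) = c a := by
  classical
  simp [finsetSum_coeff, coeff_monomial, hd.eq_iff]

lemma Polynomial.coeff_sum_monomial_eq_zero {α R : Type*} [Fintype α] [Semiring R]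
    {d : α → ℕ} (c : α → R) {r : ℕ} (hr : ∀ a, d a ≠ r) :
    (∑ b, monomial (d b) (c b)).coeff r = 0 := by
  classical
  simp [finsetSum_coeff, coeff_monomial, hr]

section Steenrod

variable {p n : ℕ} [Fact p.Prime]

lemma Pt_X_pow_pow (i : Fin n) (k : ℕ) :
    Pt p n ((X i : MvPolynomial (Fin n) (ZMod p)) ^ p ^ k) =
      Polynomial.C (X i ^ p ^ k) + Polynomial.C (X i ^ p ^ (k + 1)) * Polynomial.X ^ p ^ k := by
  rw [map_pow, Pt, aeval_X, add_pow_char_pow, ← Polynomial.C_pow, mul_pow, ← Polynomial.C_pow,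
    ← pow_mul, ← pow_succ']

lemma Pt_br (e : Fin n → ℕ) :
    Pt p n (br p e) = ∑ ε : Fin n → Bool,
      Polynomial.monomial (∑ j, if ε j then p ^ e j else 0)
        (br p fun j => e j + if ε j then 1 else 0) := by
  set T : Fin n → Bool → Polynomial (MvPolynomial (Fin n) (ZMod p)) :=
    fun j b => if b then Polynomial.X ^ p ^ e j else 1
  have hmap : (Pt p n).mapMatrix
      (Matrix.of fun i j => (X i : MvPolynomial (Fin n) (ZMod p)) ^ p ^ e j) =
      Matrix.of fun i j => ∑ b, T j b * Polynomial.C (X i ^ p ^ (e j + if b then 1 else 0)) := by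
    ext i j
    simp [T, Pt_X_pow_pow, mul_comm, add_comm]
  have hcol : ∀ ε : Fin n → Bool,
      (Matrix.of fun i j => T j (ε j) * Polynomial.C
        ((X i : MvPolynomial (Fin n) (ZMod p)) ^ p ^ (e j + if ε j then 1 else 0))).det =
      Polynomial.monomial (∑ j, if ε j then p ^ e j else 0)
        (br p fun j => e j + if ε j then 1 else 0) := fun ε => by
    have hT : ∏ j, T j (ε j) = Polynomial.X ^ ∑ j, if ε j then p ^ e j else 0 := by
      rw [← prod_pow_eq_pow_sum]
      exact prod_congr rfl fun j _ => by cases ε j <;> simp [T]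
    have hscale := Matrix.det_mul_row (fun j => T j (ε j)) ((Matrix.of fun i j =>
      (X i : MvPolynomial (Fin n) (ZMod p)) ^ p ^ (e j + if ε j then 1 else 0)).map Polynomial.C)
    simp only [Matrix.map_apply, Matrix.of_apply] at hscale
    rw [hscale, hT, ← RingHom.mapMatrix_apply, ← RingHom.map_det, mul_comm,
      Polynomial.C_mul_X_pow_eq_monomial, br]
  rw [br, AlgHom.map_det, hmap, Matrix.det_of_sum_col]
  exact sum_congr rfl fun ε _ => hcol ε

end Steenrod

theorem stmt19_general (p n : ℕ) (hp : p.Prime) (e : Fin n → ℕ)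
    (he : Function.Injective e) (r : ℕ) :
    (∀ ε ε' : Fin n → Bool,
      r = (∑ j, if ε j then p ^ e j else 0) → r = (∑ j, if ε' j then p ^ e j else 0) →
        ε = ε') ∧
    (∀ ε : Fin n → Bool, r = (∑ j, if ε j then p ^ e j else 0) →
      (Pt p n (br p e)).coeff r = br p (fun j => e j + if ε j then 1 else 0)) ∧
    ((¬ ∃ ε : Fin n → Bool, r = (∑ j, if ε j then p ^ e j else 0)) →
      (Pt p n (br p e)).coeff r = 0) := by
  have : Fact p.Prime := ⟨hp⟩
  have hd := injective_sum_ite_pow hp.two_le he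
  refine ⟨fun ε ε' hε hε' => hd (hε.symm.trans hε'), fun ε hε => ?_, fun hr => ?_⟩
  · rw [Pt_br, hε]
    exact Polynomial.coeff_sum_monomial_apply hd _ ε
  · rw [Pt_br]
    exact Polynomial.coeff_sum_monomial_eq_zero _ fun ε hε => hr ⟨ε, hε.symm⟩

/-- For pairwise distinct exponents `e_1,…,e_n` and `r ≥ 0`:
`P^r[e_1,…,e_n] = [e_1+ε_1,…,e_n+ε_n]` if `r = Σ_j ε_j p^{e_j}` with `ε_j ∈ {0,1}`
(such a representation being unique), and `P^r[e_1,…,e_n] = 0` otherwise. -/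
theorem stmt19 (p n : ℕ) (hp : p.Prime) (hodd : Odd p) (e : Fin n → ℕ)
    (he : Function.Injective e) (r : ℕ) :
    (∀ ε ε' : Fin n → Bool,
      r = (∑ j, if ε j then p ^ e j else 0) → r = (∑ j, if ε' j then p ^ e j else 0) →
        ε = ε') ∧
    (∀ ε : Fin n → Bool, r = (∑ j, if ε j then p ^ e j else 0) →
      (Pt p n (br p e)).coeff r = br p (fun j => e j + if ε j then 1 else 0)) ∧
    ((¬ ∃ ε : Fin n → Bool, r = (∑ j, if ε j then p ^ e j else 0)) →
      (Pt p n (br p e)).coeff r = 0) :=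
  stmt19_general p n hp e he r
end
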